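/- arXiv:2507.03502 — 7 statements merged into one kernel-verified Lean document; each statement's English description precedes it below -/
import Mathlib

section
/- In the 2-player normal-form game with action spaces A^1 = A^2 = {1,2}, rewards r^1(a) = r^2(a) = 1 if a = (1,2) and 0 otherwise, playerwise constraints g^{1,1}(a) = 1 if a = (1,1) else 0, g^{2,1}(a) = 1 if a = (1,2) else 0, and thresholds c^{1,1} = 1/2, c^{2,1} = 1/3, there is no joint distribution π over A^1 × A^2 satisfying both constraints E_π[g^{1,1}] ≥ 1/2 and E_π[g^{2,1}] ≥ 1/3 that is a constrained correlated equilibrium; specifically, for any feasible π, player 2 has a feasible modification strictly improving its reward. -/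
open Finset

/-! Example 1: the 2-player normal-form game with actions `{1,2}` (encoded as `Fin 2`,
`0 ↦ 1`, `1 ↦ 2`), rewards `r¹ = r² = 1{a=(1,2)}`, playerwise constraints
`g¹¹ = 1{a=(1,1)}` (threshold 1/2) and `g²¹ = 1{a=(1,2)}` (threshold 1/3)
admits no constrained correlated equilibrium: every feasible policy admits a
feasible, strictly improving modification for player 2. -/

/-- Common reward of both players: indicator of the joint action `(1,2)`. -/
def ex1Reward (a : Fin 2 × Fin 2) : ℝ := if a = (0, 1) then 1 else 0

/-- Player 1's constraint function: indicator of `(1,1)`. -/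
def ex1G11 (a : Fin 2 × Fin 2) : ℝ := if a = (0, 0) then 1 else 0

/-- Player 2's constraint function: indicator of `(1,2)`. -/
def ex1G21 (a : Fin 2 × Fin 2) : ℝ := if a = (0, 1) then 1 else 0

/-- The policy modified by a modification `φ` of player 2:
`(φ ∘ π)(a¹, b²) = ∑_{a²} φ(b² | a²) π(a¹, a²)`. -/
def modPlayer2 (φ : Fin 2 → Fin 2 → ℝ) (π : Fin 2 × Fin 2 → ℝ) :
    Fin 2 × Fin 2 → ℝ :=
  fun b => ∑ a2 : Fin 2, φ a2 b.2 * π (b.1, a2)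

theorem example1_no_constrained_correlated_equilibrium
    (π : Fin 2 × Fin 2 → ℝ)
    (hπ0 : ∀ a, 0 ≤ π a) (hπ1 : ∑ a, π a = 1)
    (hfeas1 : 1 / 2 ≤ ∑ a, π a * ex1G11 a)
    (hfeas2 : 1 / 3 ≤ ∑ a, π a * ex1G21 a) :
    ∃ φ : Fin 2 → Fin 2 → ℝ,
      (∀ a b, 0 ≤ φ a b) ∧ (∀ a, ∑ b, φ a b = 1) ∧
      (1 / 3 ≤ ∑ a, modPlayer2 φ π a * ex1G21 a) ∧
      (∑ a, π a * ex1Reward a) < ∑ a, modPlayer2 φ π a * ex1Reward a := by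
  refine ⟨fun _ b => if b = 1 then 1 else 0, ?_, ?_, ?_, ?_⟩
  · intro a b; positivity
  · intro a; simp [Fin.sum_univ_two]
  · have h1 : ∑ a, π a * ex1G11 a = π (0, 0) := by
      simp [Fintype.sum_prod_type, Fin.sum_univ_two, ex1G11, Prod.ext_iff]
    have hs : ∑ a, modPlayer2 (fun _ b => if b = 1 then 1 else 0) π a * ex1G21 a
        = π (0, 0) + π (0, 1) := by
      simp [Fintype.sum_prod_type, Fin.sum_univ_two, modPlayer2, ex1G21, Prod.ext_iff]
    rw [hs]; nlinarith [hπ0 (0, 1), hfeas1.trans_eq h1]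
  · have h1 : ∑ a, π a * ex1G11 a = π (0, 0) := by
      simp [Fintype.sum_prod_type, Fin.sum_univ_two, ex1G11, Prod.ext_iff]
    have hr : ∑ a, π a * ex1Reward a = π (0, 1) := by
      simp [Fintype.sum_prod_type, Fin.sum_univ_two, ex1Reward, Prod.ext_iff]
    have hs : ∑ a, modPlayer2 (fun _ b => if b = 1 then 1 else 0) π a * ex1Reward a
        = π (0, 0) + π (0, 1) := by
      simp [Fintype.sum_prod_type, Fin.sum_univ_two, modPlayer2, ex1Reward, Prod.ext_iff]
    rw [hr, hs]; nlinarith [hfeas1.trans_eq h1]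
end

section
/- In the augmented MDP constructed for player i under Markovian policy π (with state space S̃_t ∪ {b} and kernel P̃^π as above), given any non-Markovian stochastic modification φ^i = {φ^i_t}_{t∈[H]} with φ^i_t : (S×A)^{t-1} × S × A^i → Δ(A^i), define the Markovian modification φ̄^i_t(â^i | s_t, a^i_t) as the conditional of the occupancy measure d̃^{φ^i}_t marginalized over histories (with an arbitrary distribution when the denominator vanishes). Then for all h ∈ [H], all (s_h, a^i_h) ∈ S × A^i, and all â^i_h ∈ A^i: Σ_{s_{1:h-1}, a_{1:h-1}} d̃^{φ^i}_h((s_{1:h-1}, a_{1:h-1}, s_h, a^i_h), â^i_h) = Σ_{s_{1:h-1}, a_{1:h-1}} d̃^{φ̄^i}_h((s_{1:h-1}, a_{1:h-1}, s_h, a^i_h), â^i_h), i.e., φ^i and φ̄^i induce identical history-marginalized state-action occupancy measures. -/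
open Finset

namespace MG

noncomputable section

variable {S : Type} {ι : Type} {A : ι → Type}
variable [Fintype S] [DecidableEq S] [Fintype ι] [DecidableEq ι]
variable [∀ i, Fintype (A i)] [∀ i, DecidableEq (A i)]

/-- A finitely supported probability distribution represented as a real-valued function. -/
def IsDist {X : Type} [Fintype X] (p : X → ℝ) : Prop :=
  (∀ x, 0 ≤ p x) ∧ ∑ x, p x = 1

/-- A Markovian joint policy: at each time `t` and state `s`, a distribution over joint actions. -/
abbrev MPolicy (S : Type) (A : ι → Type) := ℕ → S → (∀ i, A i) → ℝ

def IsMPolicy (π : MPolicy S A) : Prop := ∀ t s, IsDist (π t s)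

/-- A valid transition kernel. -/
def IsKernel (P : ℕ → S → (∀ i, A i) → S → ℝ) : Prop := ∀ t s a, IsDist (P t s a)

/-- A general (history-dependent, possibly non-Markovian) joint policy. -/
abbrev HPolicy (S : Type) (A : ι → Type) :=
  (t : ℕ) → (Fin t → S × (∀ i, A i)) → S → (∀ i, A i) → ℝ

/-- A Markovian policy viewed as a history-dependent policy. -/
def lift (π : MPolicy S A) : HPolicy S A := fun t _ s a => π t s a

/-- Probability that, under initial distribution `ρ`, kernels `P` and general policy `σ`,
the history `h` occurred during the first `t` steps and the current state is `s`. -/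
def histProb (ρ : S → ℝ) (P : ℕ → S → (∀ i, A i) → S → ℝ) (σ : HPolicy S A) :
    (t : ℕ) → (Fin t → S × (∀ i, A i)) → S → ℝ
  | 0, _, s => ρ s
  | (t+1), h, s =>
      histProb ρ P σ t (fun k => h k.castSucc) (h (Fin.last t)).1 *
        σ t (fun k => h k.castSucc) (h (Fin.last t)).1 (h (Fin.last t)).2 *
        P t (h (Fin.last t)).1 (h (Fin.last t)).2 s

/-- State-action occupancy measure at (0-based) time `t` of a general policy `σ`. -/
def occ (ρ : S → ℝ) (P : ℕ → S → (∀ i, A i) → S → ℝ) (σ : HPolicy S A)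
    (t : ℕ) (s : S) (a : ∀ i, A i) : ℝ :=
  ∑ h : Fin t → S × (∀ i, A i), histProb ρ P σ t h s * σ t h s a

/-- Expected cumulative value of a stage function `f` over horizon `H` under policy `σ`. -/
def val (ρ : S → ℝ) (P : ℕ → S → (∀ i, A i) → S → ℝ) (H : ℕ)
    (f : ℕ → S → (∀ i, A i) → ℝ) (σ : HPolicy S A) : ℝ :=
  ∑ t ∈ Finset.range H, ∑ s, ∑ a, occ ρ P σ t s a * f t s a

/-- Non-Markovian stochastic modification for player `i`:
`φ t hist s b c` is the probability of replacing the sampled action `b` by `c`. -/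
abbrev NMMod (S : Type) (A : ι → Type) (i : ι) :=
  (t : ℕ) → (Fin t → S × (∀ i, A i)) → S → A i → A i → ℝ

def IsNMMod {i : ι} (φ : NMMod S A i) : Prop := ∀ t h s b, IsDist (φ t h s b)

/-- Markovian stochastic modification for player `i`. -/
abbrev MMod (S : Type) (A : ι → Type) (i : ι) := ℕ → S → A i → A i → ℝ

def IsMMod {i : ι} (φ : MMod S A i) : Prop := ∀ t s b, IsDist (φ t s b)

/-- A Markovian modification viewed as a non-Markovian one. -/
def mliftMod {i : ι} (φ : MMod S A i) : NMMod S A i := fun t _ s b c => φ t s b c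

/-- The modified (history-dependent) policy `φ ∘ π`. -/
def modNM (i : ι) (φ : NMMod S A i) (π : MPolicy S A) : HPolicy S A :=
  fun t h s a => ∑ b : A i, φ t h s b (a i) * π t s (Function.update a i b)

/-- The modified Markovian policy `φ ∘ π` for a Markovian modification. -/
def modM (i : ι) (φ : MMod S A i) (π : MPolicy S A) : MPolicy S A :=
  fun t s a => ∑ b : A i, φ t s b (a i) * π t s (Function.update a i b)

/-- Markovian deterministic modifications over horizon `H`. -/
abbrev DMod (S : Type) (A : ι → Type) (H : ℕ) (i : ι) := Fin H → S → A i → A i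

/-- A deterministic modification viewed as a Markovian stochastic one
(identity beyond the horizon). -/
def detToM {H : ℕ} {i : ι} (k : DMod S A H i) : MMod S A i :=
  fun t s b c => if h : t < H then (if c = k ⟨t, h⟩ s b then 1 else 0)
                 else (if c = b then 1 else 0)

/-! ### The first augmented MDP (for a fixed player `i` and Markovian policy `π`) -/

/-- Transition kernel of the first augmented MDP, between genuine augmented states. -/
def Ptilde (P : ℕ → S → (∀ i, A i) → S → ℝ) (π : MPolicy S A) (i : ι) (t : ℕ)
    (x : (Fin t → S × (∀ i, A i)) × S × A i) (ahat : A i)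
    (y : (Fin (t+1) → S × (∀ i, A i)) × S × A i) : ℝ :=
  if (∀ k : Fin t, y.1 k.castSucc = x.1 k) ∧ (y.1 (Fin.last t)).1 = x.2.1 ∧
      (y.1 (Fin.last t)).2 i = ahat then
    (1 / (Fintype.card (A i) : ℝ)) * P t x.2.1 (y.1 (Fin.last t)).2 y.2.1 *
      π t x.2.1 (Function.update (y.1 (Fin.last t)).2 i x.2.2)
  else 0

/-- Transition probability into the absorbing state `b` in the first augmented MDP. -/
def PtildeB (π : MPolicy S A) (i : ι) (t : ℕ)
    (x : (Fin t → S × (∀ i, A i)) × S × A i) (_ahat : A i) : ℝ :=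
  1 - ∑ a : ∀ i, A i, if a i = x.2.2 then π t x.2.1 a else 0

/-- Initial distribution of the augmented MDPs: `ρ̃(s, aⁱ) = ρ(s)/|Aⁱ|`. -/
def rhoTilde (ρ : S → ℝ) (i : ι) (x : S × A i) : ℝ := ρ x.1 / (Fintype.card (A i) : ℝ)

/-- Occupancy measure of a (history-dependent) policy `φ` in the first augmented MDP. -/
def dtil (ρ : S → ℝ) (P : ℕ → S → (∀ i, A i) → S → ℝ) (π : MPolicy S A)
    (i : ι) (φ : NMMod S A i) :
    (t : ℕ) → ((Fin t → S × (∀ i, A i)) × S × A i) → A i → ℝ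
  | 0, x, b => rhoTilde ρ i x.2 * φ 0 x.1 x.2.1 x.2.2 b
  | (t+1), x, b =>
      (∑ x' : (Fin t → S × (∀ i, A i)) × S × A i, ∑ c : A i,
        dtil ρ P π i φ t x' c * Ptilde P π i t x' c x) * φ (t+1) x.1 x.2.1 x.2.2 b

/-! ### The second augmented MDP -/

/-- Transition kernel of the second augmented MDP (states `S × A i`). -/
def Pbar (P : ℕ → S → (∀ i, A i) → S → ℝ) (π : MPolicy S A) (i : ι) (t : ℕ)
    (x : S × A i) (ahat : A i) (y : S × A i) : ℝ :=
  (1 / (Fintype.card (A i) : ℝ)) *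
    ∑ a : ∀ i, A i, if a i = ahat then
      P t x.1 a y.1 * π t x.1 (Function.update a i x.2) else 0

/-- Transition probability into the absorbing state `b` in the second augmented MDP. -/
def PbarB (π : MPolicy S A) (i : ι) (t : ℕ) (x : S × A i) (_ahat : A i) : ℝ :=
  1 - ∑ a : ∀ i, A i, if a i = x.2 then π t x.1 a else 0

/-- Occupancy measure of a Markovian modification `φ` (seen as a policy)
in the second augmented MDP. -/
def dbar (ρ : S → ℝ) (P : ℕ → S → (∀ i, A i) → S → ℝ) (π : MPolicy S A)
    (i : ι) (φ : MMod S A i) : ℕ → S × A i → A i → ℝ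
  | 0 => fun x b => rhoTilde ρ i x * φ 0 x.1 x.2 b
  | (t+1) => fun x b =>
      (∑ x' : S × A i, ∑ c : A i, dbar ρ P π i φ t x' c * Pbar P π i t x' c x) *
        φ (t+1) x.1 x.2 b

/-- Reward of the second augmented MDP induced by a reward `r` of the original game. -/
def rbar (π : MPolicy S A) (i : ι) (r : ℕ → S → (∀ i, A i) → ℝ) (t : ℕ)
    (x : S × A i) (ahat : A i) : ℝ :=
  (Fintype.card (A i) : ℝ) ^ (t + 1) *
    ∑ a : ∀ i, A i, if a i = ahat then
      r t x.1 a * π t x.1 (Function.update a i x.2) else 0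

/-! ### Feasible occupancy measures, policy extraction, and the LP -/

/-- The set of feasible state-action occupancy measures (common coupling constraints). -/
def Cd (ρ : S → ℝ) (P : ℕ → S → (∀ i, A i) → S → ℝ) (H J : ℕ)
    (g : Fin J → ℕ → S → (∀ i, A i) → ℝ) (c : Fin J → ℝ) :
    Set (Fin H → S → (∀ i, A i) → ℝ) :=
  {x | ∃ π : MPolicy S A, IsMPolicy π ∧ (∀ j, c j ≤ val ρ P H (g j) (lift π)) ∧
        ∀ (t : Fin H) (s : S) (a : ∀ i, A i), x t s a = occ ρ P (lift π) t.1 s a}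

/-- Policy extraction from an occupancy measure (arbitrary where the marginal vanishes). -/
def Gamma (H : ℕ)
    (d : Fin H → S → (∀ i, A i) → ℝ) : Set (MPolicy S A) :=
  {π | IsMPolicy π ∧ ∀ (t : Fin H) (s : S) (a : ∀ i, A i),
      (∑ a', d t s a') ≠ 0 → π t.1 s a = d t s a / ∑ a', d t s a'}

/-- Objective of the linear program `LPⁱ(π)`. -/
def LPobj (ρ : S → ℝ) (P : ℕ → S → (∀ i, A i) → S → ℝ) (H : ℕ)
    (r : ℕ → S → (∀ i, A i) → ℝ) (i : ι) (π : MPolicy S A)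
    (α : DMod S A H i → ℝ) : ℝ :=
  ∑ k, α k * val ρ P H r (lift (modM i (detToM k) π))

/-- Feasibility for the linear program `LPⁱ(π)`. -/
def LPfeas (ρ : S → ℝ) (P : ℕ → S → (∀ i, A i) → S → ℝ) (H J : ℕ)
    (g : Fin J → ℕ → S → (∀ i, A i) → ℝ) (c : Fin J → ℝ) (i : ι) (π : MPolicy S A)
    (α : DMod S A H i → ℝ) : Prop :=
  (∀ k, 0 ≤ α k) ∧ (∑ k, α k = 1) ∧
    ∀ j, c j ≤ ∑ k, α k * val ρ P H (g j) (lift (modM i (detToM k) π))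

/-- Optimal solutions of the linear program `LPⁱ(π)`. -/
def LPopt (ρ : S → ℝ) (P : ℕ → S → (∀ i, A i) → S → ℝ) (H J : ℕ)
    (g : Fin J → ℕ → S → (∀ i, A i) → ℝ) (c : Fin J → ℝ)
    (r : ℕ → S → (∀ i, A i) → ℝ) (i : ι) (π : MPolicy S A)
    (α : DMod S A H i → ℝ) : Prop :=
  LPfeas ρ P H J g c i π α ∧
    ∀ β, LPfeas ρ P H J g c i π β → LPobj ρ P H r i π β ≤ LPobj ρ P H r i π α

/-- Optimal value `Ψⁱ(π)` of the linear program `LPⁱ(π)`. -/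
noncomputable def Psi (ρ : S → ℝ) (P : ℕ → S → (∀ i, A i) → S → ℝ) (H J : ℕ)
    (g : Fin J → ℕ → S → (∀ i, A i) → ℝ) (c : Fin J → ℝ)
    (r : ℕ → S → (∀ i, A i) → ℝ) (i : ι) (π : MPolicy S A) : ℝ :=
  sSup ((fun α => LPobj ρ P H r i π α) '' {α | LPfeas ρ P H J g c i π α})

end
end MG

section AuxHelpers

open MG Finset

private lemma aux_sum_ite_and_eq {α : Type} [Fintype α] [DecidableEq α]
    (Q : Prop) [Decidable Q] (v : α) (X : α → ℝ) :
    ∑ c : α, (if Q ∧ v = c then X c else 0) = if Q then X v else 0 := by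
  by_cases hQ : Q <;> simp [hQ]

private lemma aux_sum_ite_const {α : Type} [Fintype α]
    (C : Prop) [Decidable C] (X : α → ℝ) :
    ∑ c : α, (if C then X c else 0) = if C then ∑ c : α, X c else 0 := by
  by_cases h : C <;> simp [h]

private def auxSnocEquiv (t : ℕ) (X : Type) : ((Fin t → X) × X) ≃ (Fin (t+1) → X) where
  toFun gp := Fin.snoc gp.1 gp.2
  invFun h := (Fin.init h, h (Fin.last t))
  left_inv gp := by simp [Fin.init_snoc, Fin.snoc_last]
  right_inv h := by simp [Fin.snoc_init_self]

private lemma aux_sum_snoc {X : Type} [Fintype X] {t : ℕ} (f : (Fin (t+1) → X) → ℝ) :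
    ∑ h : Fin (t+1) → X, f h = ∑ g : Fin t → X, ∑ p : X, f (Fin.snoc g p) := by
  calc ∑ h : Fin (t+1) → X, f h
      = ∑ gp : (Fin t → X) × X, f (Fin.snoc gp.1 gp.2) :=
        (Fintype.sum_equiv (auxSnocEquiv t X) _ _ (fun gp => rfl)).symm
    _ = ∑ g : Fin t → X, ∑ p : X, f (Fin.snoc g p) :=
        Fintype.sum_prod_type (f := fun gp => f (Fin.snoc gp.1 gp.2))

variable {S : Type} {ι : Type} {A : ι → Type}
  [Fintype S] [DecidableEq S] [Fintype ι] [DecidableEq ι]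
  [∀ i, Fintype (A i)] [∀ i, DecidableEq (A i)]

private lemma aux_Ptilde_nonneg (P : ℕ → S → (∀ i, A i) → S → ℝ) (π : MPolicy S A) (i : ι)
    (hπ : IsMPolicy π) (hP : IsKernel P) (t : ℕ)
    (x : (Fin t → S × (∀ i, A i)) × S × A i) (c : A i)
    (y : (Fin (t+1) → S × (∀ i, A i)) × S × A i) :
    0 ≤ Ptilde P π i t x c y := by
  unfold Ptilde
  split
  · exact mul_nonneg (mul_nonneg (by positivity) ((hP _ _ _).1 _)) ((hπ _ _).1 _)
  · exact le_refl 0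

private lemma aux_dtil_nonneg (ρ : S → ℝ) (P : ℕ → S → (∀ i, A i) → S → ℝ)
    (π : MPolicy S A) (i : ι) (hρ : IsDist ρ) (hπ : IsMPolicy π) (hP : IsKernel P)
    (ψ : NMMod S A i) (hψ : IsNMMod ψ) :
    ∀ (t : ℕ) (x : (Fin t → S × (∀ i, A i)) × S × A i) (b : A i),
      0 ≤ dtil ρ P π i ψ t x b
  | 0, x, b => by
      simp only [dtil]
      exact mul_nonneg (div_nonneg (hρ.1 _) (by positivity)) ((hψ _ _ _ _).1 _)
  | (t+1), x, b => by
      simp only [dtil]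
      refine mul_nonneg (Finset.sum_nonneg fun x' _ => Finset.sum_nonneg fun c _ =>
        mul_nonneg (aux_dtil_nonneg ρ P π i hρ hπ hP ψ hψ t x' c)
          (aux_Ptilde_nonneg P π i hπ hP t x' c x)) ((hψ _ _ _ _).1 _)

private lemma aux_collapse (ρ : S → ℝ) (P : ℕ → S → (∀ i, A i) → S → ℝ)
    (π : MPolicy S A) (i : ι) (ψ : NMMod S A i) (t : ℕ) (s' : S) (ai' : A i)
    (g : Fin t → S × (∀ j, A j)) (p : S × (∀ j, A j)) :
    ∑ x' : (Fin t → S × (∀ j, A j)) × S × A i, ∑ c : A i,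
      dtil ρ P π i ψ t x' c * Ptilde P π i t x' c (Fin.snoc g p, s', ai') =
    ∑ q2 : A i, dtil ρ P π i ψ t (g, p.1, q2) (p.2 i) *
      ((1 / (Fintype.card (A i) : ℝ)) * P t p.1 p.2 s' * π t p.1 (Function.update p.2 i q2)) := by
  classical
  rw [Fintype.sum_prod_type]
  simp only [Fintype.sum_prod_type]
  simp only [Ptilde, Fin.snoc_castSucc, Fin.snoc_last, mul_ite, mul_zero]
  simp only [← funext_iff, ← and_assoc]
  simp only [aux_sum_ite_and_eq, aux_sum_ite_const, Finset.sum_ite_eq, Finset.mem_univ,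
    if_true]

private lemma aux_sumW (ρ : S → ℝ) (P : ℕ → S → (∀ i, A i) → S → ℝ)
    (π : MPolicy S A) (i : ι) (ψ : NMMod S A i) (t : ℕ) (s' : S) (ai' : A i) :
    ∑ h' : Fin (t+1) → S × (∀ j, A j),
      ∑ x' : (Fin t → S × (∀ j, A j)) × S × A i, ∑ c : A i,
        dtil ρ P π i ψ t x' c * Ptilde P π i t x' c (h', s', ai') =
    ∑ p : S × (∀ j, A j), ∑ d : A i,
      (∑ g : Fin t → S × (∀ j, A j), dtil ρ P π i ψ t (g, p.1, d) (p.2 i)) *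
        ((1 / (Fintype.card (A i) : ℝ)) * P t p.1 p.2 s' * π t p.1 (Function.update p.2 i d)) := by
  rw [aux_sum_snoc]
  calc ∑ g : Fin t → S × (∀ j, A j), ∑ p : S × (∀ j, A j),
        ∑ x' : (Fin t → S × (∀ j, A j)) × S × A i, ∑ c : A i,
          dtil ρ P π i ψ t x' c * Ptilde P π i t x' c (Fin.snoc g p, s', ai')
      = ∑ g : Fin t → S × (∀ j, A j), ∑ p : S × (∀ j, A j), ∑ d : A i,
          dtil ρ P π i ψ t (g, p.1, d) (p.2 i) *
            ((1 / (Fintype.card (A i) : ℝ)) * P t p.1 p.2 s' *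
              π t p.1 (Function.update p.2 i d)) :=
        Finset.sum_congr rfl fun g _ => Finset.sum_congr rfl fun p _ =>
          aux_collapse ρ P π i ψ t s' ai' g p
    _ = ∑ p : S × (∀ j, A j), ∑ d : A i, ∑ g : Fin t → S × (∀ j, A j),
          dtil ρ P π i ψ t (g, p.1, d) (p.2 i) *
            ((1 / (Fintype.card (A i) : ℝ)) * P t p.1 p.2 s' *
              π t p.1 (Function.update p.2 i d)) := by
        rw [Finset.sum_comm]
        exact Finset.sum_congr rfl fun p _ => Finset.sum_comm
    _ = ∑ p : S × (∀ j, A j), ∑ d : A i,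
          (∑ g : Fin t → S × (∀ j, A j), dtil ρ P π i ψ t (g, p.1, d) (p.2 i)) *
            ((1 / (Fintype.card (A i) : ℝ)) * P t p.1 p.2 s' *
              π t p.1 (Function.update p.2 i d)) := by
        simp only [Finset.sum_mul]

end AuxHelpers

open MG in
/-- The Markovian modification `φ̄ⁱ`, defined as the history-marginalized conditional of
the occupancy measure of a non-Markovian modification `φⁱ` in the first augmented MDP,
induces the same history-marginalized state-action occupancy measures as `φⁱ`. -/
theorem markovian_modification_same_marginal_occupancy
    {S : Type} {ι : Type} {A : ι → Type}
    [Fintype S] [DecidableEq S] [Fintype ι] [DecidableEq ι]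
    [∀ i, Fintype (A i)] [∀ i, DecidableEq (A i)] [∀ i, Nonempty (A i)]
    (ρ : S → ℝ) (P : ℕ → S → (∀ i, A i) → S → ℝ) (π : MPolicy S A) (i : ι)
    (hρ : IsDist ρ) (hπ : IsMPolicy π) (hP : IsKernel P)
    (φ : NMMod S A i) (hφ : IsNMMod φ)
    (φbar : MMod S A i) (hφbar : IsMMod φbar)
    -- φ̄ is the conditional of the marginalized occupancy measure whenever
    -- the denominator is positive (and an arbitrary distribution otherwise)
    (hcond : ∀ (t : ℕ) (s : S) (ai b : A i),
      0 < (∑ b' : A i, ∑ h : Fin t → S × (∀ i, A i), dtil ρ P π i φ t (h, s, ai) b') →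
      φbar t s ai b =
        (∑ h : Fin t → S × (∀ i, A i), dtil ρ P π i φ t (h, s, ai) b) /
          (∑ b' : A i, ∑ h : Fin t → S × (∀ i, A i), dtil ρ P π i φ t (h, s, ai) b')) :
    ∀ (t : ℕ) (s : S) (ai b : A i),
      (∑ h : Fin t → S × (∀ i, A i), dtil ρ P π i φ t (h, s, ai) b) =
        ∑ h : Fin t → S × (∀ i, A i), dtil ρ P π i (mliftMod φbar) t (h, s, ai) b := by
  intro t
  induction t with
  | zero =>
    intro s ai b
    have hcard : (0:ℝ) < (Fintype.card (A i) : ℝ) := by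
      exact_mod_cast Fintype.card_pos
    simp only [dtil, mliftMod]
    rw [Fintype.sum_unique, Fintype.sum_unique]
    rcases eq_or_lt_of_le (hρ.1 s) with h0 | hpos
    · simp [rhoTilde, ← h0]
    · have hr0 : (0:ℝ) < rhoTilde ρ i (s, ai) := div_pos hpos hcard
      have hDpos : 0 < ∑ b' : A i, ∑ h : Fin 0 → S × (∀ j, A j),
          dtil ρ P π i φ 0 (h, s, ai) b' := by
        simp only [dtil, Fintype.sum_unique, ← Finset.mul_sum,
          (hφ 0 default s ai).2, mul_one]
        exact hr0
      rw [hcond 0 s ai b hDpos]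
      simp only [dtil, Fintype.sum_unique, ← Finset.mul_sum, (hφ 0 default s ai).2,
        mul_one]
      have hne : rhoTilde ρ i (s, ai) ≠ 0 := ne_of_gt hr0
      field_simp
  | succ t IH =>
    intro s ai b
    classical
    set W : (Fin (t+1) → S × (∀ j, A j)) → ℝ := fun h' =>
      ∑ x' : (Fin t → S × (∀ j, A j)) × S × A i, ∑ c : A i,
        dtil ρ P π i φ t x' c * Ptilde P π i t x' c (h', s, ai) with hWdef
    set W' : (Fin (t+1) → S × (∀ j, A j)) → ℝ := fun h' =>
      ∑ x' : (Fin t → S × (∀ j, A j)) × S × A i, ∑ c : A i,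
        dtil ρ P π i (mliftMod φbar) t x' c * Ptilde P π i t x' c (h', s, ai) with hW'def
    have hWsum : ∑ h' : Fin (t+1) → S × (∀ j, A j), W' h' =
        ∑ h' : Fin (t+1) → S × (∀ j, A j), W h' := by
      rw [hWdef, hW'def, aux_sumW, aux_sumW]
      exact Finset.sum_congr rfl fun p _ => Finset.sum_congr rfl fun d _ => by
        rw [← IH p.1 d (p.2 i)]
    have hdil : ∀ (ψ : NMMod S A i) (h' : Fin (t+1) → S × (∀ j, A j)) (b' : A i),
        dtil ρ P π i ψ (t+1) (h', s, ai) b' =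
          (∑ x' : (Fin t → S × (∀ j, A j)) × S × A i, ∑ c : A i,
            dtil ρ P π i ψ t x' c * Ptilde P π i t x' c (h', s, ai)) *
            ψ (t+1) h' s ai b' := fun ψ h' b' => rfl
    have hRHS : ∑ h' : Fin (t+1) → S × (∀ j, A j),
        dtil ρ P π i (mliftMod φbar) (t+1) (h', s, ai) b =
        (∑ h' : Fin (t+1) → S × (∀ j, A j), W h') * φbar (t+1) s ai b := by
      rw [← hWsum, Finset.sum_mul]
      exact Finset.sum_congr rfl fun h' _ => hdil (mliftMod φbar) h' b
    set D := ∑ b' : A i, ∑ h' : Fin (t+1) → S × (∀ j, A j),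
      dtil ρ P π i φ (t+1) (h', s, ai) b' with hDdef
    have hDW : D = ∑ h' : Fin (t+1) → S × (∀ j, A j), W h' := by
      rw [hDdef, Finset.sum_comm]
      refine Finset.sum_congr rfl fun h' _ => ?_
      calc ∑ b' : A i, dtil ρ P π i φ (t+1) (h', s, ai) b'
          = ∑ b' : A i, W h' * φ (t+1) h' s ai b' :=
            Finset.sum_congr rfl fun b' _ => hdil φ h' b'
        _ = W h' * ∑ b' : A i, φ (t+1) h' s ai b' := by rw [Finset.mul_sum]
        _ = W h' := by rw [(hφ (t+1) h' s ai).2, mul_one]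
    have hdnn : ∀ (h' : Fin (t+1) → S × (∀ j, A j)) (b' : A i),
        0 ≤ dtil ρ P π i φ (t+1) (h', s, ai) b' := fun h' b' =>
      aux_dtil_nonneg ρ P π i hρ hπ hP φ hφ (t+1) (h', s, ai) b'
    have hDnn : 0 ≤ D :=
      Finset.sum_nonneg fun b' _ => Finset.sum_nonneg fun h' _ => hdnn h' b'
    rcases eq_or_lt_of_le hDnn with hD0 | hDpos
    · -- D = 0 : everything vanishes
      have hMz : ∀ b' : A i,
          ∑ h' : Fin (t+1) → S × (∀ j, A j), dtil ρ P π i φ (t+1) (h', s, ai) b' = 0 := by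
        have := (Finset.sum_eq_zero_iff_of_nonneg
          (fun b' _ => Finset.sum_nonneg fun h' _ => hdnn h' b')).mp hD0.symm
        exact fun b' => this b' (Finset.mem_univ b')
      rw [hMz b, hRHS, ← hDW, ← hD0, zero_mul]
    · -- D > 0 : use the conditional formula
      have hbar := hcond (t+1) s ai b hDpos
      have hNum : ∑ h' : Fin (t+1) → S × (∀ j, A j),
          dtil ρ P π i φ (t+1) (h', s, ai) b =
          ∑ h : Fin (t+1) → S × (∀ j, A j), dtil ρ P π i φ (t+1) (h, s, ai) b := rfl
      rw [hRHS, hbar, ← hDW]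

      rw [mul_comm, div_mul_cancel₀]
      exact ne_of_gt hDpos
end

section
/- For any player i, any Markovian policy π, and any non-Markovian stochastic modification φ^i, the state-action occupancy measure of the modified policy φ^i ∘ π in the original finite-horizon Markov game satisfies, for all h ∈ [H] and (s_h, (â^i_h, a^{-i}_h)) ∈ S × A: d^{φ^i ∘ π}_h(s_h, (â^i_h, a^{-i}_h)) = |A^i|^h Σ_{a^i_h} Σ_{s_{1:h-1}, a_{1:h-1}} d̃^{φ^i}_h((s_{1:h-1}, a_{1:h-1}, s_h, a^i_h), â^i_h) · π_h((a^i_h, a^{-i}_h) | s_h), where d̃^{φ^i} is the occupancy measure of φ^i viewed as a policy in the augmented MDP. -/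
open Finset

open MG in
theorem dtil_eq_hist
    {S : Type} {ι : Type} {A : ι → Type}
    [Fintype S] [DecidableEq S] [Fintype ι] [DecidableEq ι]
    [∀ i, Fintype (A i)] [∀ i, DecidableEq (A i)]
    (ρ : S → ℝ) (P : ℕ → S → (∀ i, A i) → S → ℝ) (π : MPolicy S A) (i : ι)
    (φ : NMMod S A i) :
    ∀ (t : ℕ) (x : Fin t → S × (∀ i, A i)) (s : S) (ai b : A i),
      dtil ρ P π i φ t (x, s, ai) b =
        ((Fintype.card (A i) : ℝ))⁻¹ ^ (t + 1) *
          histProb ρ P (modNM i φ π) t x s * φ t x s ai b := by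
  intro t
  induction t with
  | zero =>
    intro x s ai b
    simp only [dtil, rhoTilde, histProb]
    ring
  | succ t ih =>
    intro x s' ai' b
    have hsum : (∑ x' : (Fin t → S × (∀ i, A i)) × S × A i, ∑ c : A i,
          dtil ρ P π i φ t x' c * Ptilde P π i t x' c (x, s', ai'))
        = ∑ aa : A i,
            dtil ρ P π i φ t ((fun k => x k.castSucc), (x (Fin.last t)).1, aa)
              ((x (Fin.last t)).2 i) *
            ((Fintype.card (A i) : ℝ)⁻¹ * P t (x (Fin.last t)).1 (x (Fin.last t)).2 s' *
              π t (x (Fin.last t)).1 (Function.update (x (Fin.last t)).2 i aa)) := by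
      rw [Fintype.sum_prod_type]
      rw [Fintype.sum_eq_single (fun k => x k.castSucc)]
      · rw [Fintype.sum_prod_type]
        rw [Fintype.sum_eq_single (x (Fin.last t)).1]
        · refine Finset.sum_congr rfl (fun aa _ => ?_)
          rw [Fintype.sum_eq_single ((x (Fin.last t)).2 i)]
          · rw [Ptilde, if_pos ⟨fun k => rfl, rfl, rfl⟩]
            ring
          · intro c hc
            rw [Ptilde, if_neg, mul_zero]
            rintro ⟨-, -, h3⟩
            exact hc h3.symm
        · intro s0 hs0
          refine Finset.sum_eq_zero (fun aa _ => Finset.sum_eq_zero (fun c _ => ?_))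
          rw [Ptilde, if_neg, mul_zero]
          rintro ⟨-, h2, -⟩
          exact hs0 h2.symm
      · intro h0 hh0
        refine Finset.sum_eq_zero (fun p _ => Finset.sum_eq_zero (fun c _ => ?_))
        rw [Ptilde, if_neg, mul_zero]
        rintro ⟨h1, -, -⟩
        exact hh0 (funext fun k => (h1 k).symm)
    have expand : histProb ρ P (modNM i φ π) (t+1) x s' =
        ∑ aa : A i,
          histProb ρ P (modNM i φ π) t (fun k => x k.castSucc) (x (Fin.last t)).1 *
            (φ t (fun k => x k.castSucc) (x (Fin.last t)).1 aa ((x (Fin.last t)).2 i) *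
              π t (x (Fin.last t)).1 (Function.update (x (Fin.last t)).2 i aa)) *
            P t (x (Fin.last t)).1 (x (Fin.last t)).2 s' := by
      rw [histProb]
      simp only [modNM]
      rw [Finset.mul_sum, Finset.sum_mul]
    rw [show dtil ρ P π i φ (t+1) (x, s', ai') b =
          (∑ x' : (Fin t → S × (∀ i, A i)) × S × A i, ∑ c : A i,
            dtil ρ P π i φ t x' c * Ptilde P π i t x' c (x, s', ai')) *
            φ (t+1) x s' ai' b from rfl]
    rw [hsum, expand, Finset.sum_mul, Finset.mul_sum, Finset.sum_mul]
    refine Finset.sum_congr rfl (fun aa _ => ?_)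
    rw [ih]
    ring

open MG in
/-- One-to-one correspondence between the occupancy measure of the modified policy
`φⁱ ∘ π` in the original Markov game and the occupancy measure of `φⁱ` in the first
augmented MDP:
`d^{φ∘π}_h(s, (âⁱ, a⁻ⁱ)) = |Aⁱ|^h ∑_{aⁱ} ∑_{hist} d̃^φ_h((hist, s, aⁱ), âⁱ) π_h((aⁱ,a⁻ⁱ)|s)`
(time is 0-indexed here, so the exponent is `t + 1`). -/
theorem occupancy_correspondence_first_augmented_mdp
    {S : Type} {ι : Type} {A : ι → Type}
    [Fintype S] [DecidableEq S] [Fintype ι] [DecidableEq ι]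
    [∀ i, Fintype (A i)] [∀ i, DecidableEq (A i)] [∀ i, Nonempty (A i)]
    (ρ : S → ℝ) (P : ℕ → S → (∀ i, A i) → S → ℝ) (π : MPolicy S A) (i : ι)
    (hρ : IsDist ρ) (hπ : IsMPolicy π) (hP : IsKernel P)
    (φ : NMMod S A i) (hφ : IsNMMod φ) :
    ∀ (t : ℕ) (s : S) (a : ∀ i, A i),
      occ ρ P (modNM i φ π) t s a =
        (Fintype.card (A i) : ℝ) ^ (t + 1) *
          ∑ ai : A i,
            (∑ h : Fin t → S × (∀ i, A i), dtil ρ P π i φ t (h, s, ai) (a i)) *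
              π t s (Function.update a i ai) := by
  intro t s a
  have hN : (0:ℝ) < (Fintype.card (A i) : ℝ) := by
    exact_mod_cast Fintype.card_pos
  have key := dtil_eq_hist ρ P π i φ t
  simp only [occ, modNM]
  rw [Finset.mul_sum]
  simp only [Finset.mul_sum]
  rw [Finset.sum_comm]
  refine Finset.sum_congr rfl (fun b _ => ?_)
  rw [Finset.sum_mul, Finset.mul_sum]
  refine Finset.sum_congr rfl (fun x _ => ?_)
  rw [key x s b (a i)]
  have h1 : ((Fintype.card (A i) : ℝ)) ^ (t+1) * ((Fintype.card (A i) : ℝ))⁻¹ ^ (t+1) = 1 := by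
    rw [← mul_pow, mul_inv_cancel₀ (ne_of_gt hN), one_pow]
  linear_combination (-(histProb ρ P (modNM i φ π) t x s * φ t x s b (a i) *
    π t s (Function.update a i b))) * h1
end

section
/- In a finite-horizon Markov game with finite state and action spaces, for any player i, any Markovian policy π, and any non-Markovian stochastic modification φ^i ∈ Φ^i_{NM}, there exists a Markovian stochastic modification φ̄^i ∈ Φ^i_M such that the modified policies induce identical state-action occupancy measures: d^{φ^i ∘ π}_t(s, a) = d^{φ̄^i ∘ π}_t(s, a) for all (s,a) ∈ S × A and all t ∈ [H]. Consequently, V^{r^i}(φ^i ∘ π) = V^{r^i}(φ̄^i ∘ π) and V^{g^{i,j}}(φ^i ∘ π) = V^{g^{i,j}}(φ̄^i ∘ π) for all constraints j. -/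
open Finset

section Aux
open MG

variable {S : Type} {ι : Type} {A : ι → Type}
variable [Fintype S] [DecidableEq S] [Fintype ι] [DecidableEq ι]
variable [∀ i, Fintype (A i)] [∀ i, DecidableEq (A i)]

/-- State occupancy measure. -/
noncomputable def stOcc (ρ : S → ℝ) (P : ℕ → S → (∀ i, A i) → S → ℝ) (σ : HPolicy S A)
    (t : ℕ) (s : S) : ℝ :=
  ∑ h : Fin t → S × (∀ i, A i), histProb ρ P σ t h s

lemma histProb_nonneg (ρ : S → ℝ) (P : ℕ → S → (∀ i, A i) → S → ℝ) (σ : HPolicy S A)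
    (hρ : ∀ s, 0 ≤ ρ s) (hP : ∀ t s a s', 0 ≤ P t s a s')
    (hσ : ∀ t h s a, 0 ≤ σ t h s a) :
    ∀ (t : ℕ) (h : Fin t → S × (∀ i, A i)) (s : S), 0 ≤ histProb ρ P σ t h s := by
  intro t
  induction t with
  | zero => intro h s; exact hρ s
  | succ t ih =>
      intro h s
      exact mul_nonneg (mul_nonneg (ih _ _) (hσ _ _ _ _)) (hP _ _ _ _)

lemma stOcc_nonneg (ρ : S → ℝ) (P : ℕ → S → (∀ i, A i) → S → ℝ) (σ : HPolicy S A)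
    (hρ : ∀ s, 0 ≤ ρ s) (hP : ∀ t s a s', 0 ≤ P t s a s')
    (hσ : ∀ t h s a, 0 ≤ σ t h s a) (t : ℕ) (s : S) : 0 ≤ stOcc ρ P σ t s :=
  Finset.sum_nonneg fun _ _ => histProb_nonneg ρ P σ hρ hP hσ _ _ _

/-- Splitting off the last element of a history. -/
noncomputable def histEquiv (t : ℕ) :
    ((Fin t → S × (∀ i, A i)) × (S × (∀ i, A i))) ≃ (Fin (t+1) → S × (∀ i, A i)) where
  toFun p := Fin.snoc p.1 p.2
  invFun h := (fun k => h k.castSucc, h (Fin.last t))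
  left_inv := by
    rintro ⟨h, x⟩
    simp [Fin.snoc_castSucc, Fin.snoc_last]
  right_inv := by
    intro h
    exact Fin.snoc_init_self h

lemma stOcc_zero (ρ : S → ℝ) (P : ℕ → S → (∀ i, A i) → S → ℝ) (σ : HPolicy S A) (s : S) :
    stOcc ρ P σ 0 s = ρ s := by
  simp [stOcc, histProb]

lemma stOcc_succ (ρ : S → ℝ) (P : ℕ → S → (∀ i, A i) → S → ℝ) (σ : HPolicy S A)
    (t : ℕ) (s : S) :
    stOcc ρ P σ (t+1) s = ∑ s', ∑ a, occ ρ P σ t s' a * P t s' a s := by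
  classical
  rw [stOcc, ← Equiv.sum_comp (histEquiv t) (fun h => histProb ρ P σ (t+1) h s)]
  rw [Fintype.sum_prod_type]
  have key : ∀ (h' : Fin t → S × (∀ i, A i)) (x : S × (∀ i, A i)),
      histProb ρ P σ (t+1) ((histEquiv t) (h', x)) s
        = histProb ρ P σ t h' x.1 * σ t h' x.1 x.2 * P t x.1 x.2 s := by
    intro h' x
    show histProb ρ P σ (t+1) (Fin.snoc h' x) s = _
    have h1 : (fun k : Fin t => (Fin.snoc h' x : Fin (t+1) → S × (∀ i, A i)) k.castSucc) = h' := by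
      funext k; simp
    have h2 : (Fin.snoc h' x : Fin (t+1) → S × (∀ i, A i)) (Fin.last t) = x := by simp
    rw [histProb, h1, h2]
  simp only [key]
  rw [Finset.sum_comm]
  conv_rhs => rw [← Fintype.sum_prod_type']
  refine Finset.sum_congr rfl fun y _ => ?_
  rw [occ, Finset.sum_mul]

lemma occ_lift (ρ : S → ℝ) (P : ℕ → S → (∀ i, A i) → S → ℝ) (τ : MPolicy S A)
    (t : ℕ) (s : S) (a : ∀ i, A i) :
    occ ρ P (lift τ) t s a = stOcc ρ P (lift τ) t s * τ t s a := by
  simp [occ, stOcc, lift, Finset.sum_mul]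

variable (ρ : S → ℝ) (P : ℕ → S → (∀ i, A i) → S → ℝ) (π : MPolicy S A)
  (i : ι) (φ : NMMod S A i)

/-- Joint probability of being in state `s` at time `t` (under the non-Markovian
modified policy) and the modification mapping `b` to `c`. -/
noncomputable def mAux (t : ℕ) (s : S) (b c : A i) : ℝ :=
  ∑ h : Fin t → S × (∀ i, A i), histProb ρ P (modNM i φ π) t h s * φ t h s b c

/-- The Markovianized modification. -/
noncomputable def phibar (t : ℕ) (s : S) (b c : A i) : ℝ :=
  if stOcc ρ P (modNM i φ π) t s = 0 then (if c = b then 1 else 0)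
  else mAux ρ P π i φ t s b c / stOcc ρ P (modNM i φ π) t s

variable (hρ : IsDist ρ) (hπ : IsMPolicy π) (hP : IsKernel P) (hφ : IsNMMod φ)

include hρ hπ hP hφ

lemma modNM_nonneg : ∀ (t : ℕ) (h : Fin t → S × (∀ i, A i)) (s : S) (a : ∀ i, A i),
    0 ≤ modNM i φ π t h s a := by
  intro t h s a
  exact Finset.sum_nonneg fun b _ =>
    mul_nonneg ((hφ t h s b).1 _) ((hπ t s).1 _)

lemma mAux_nonneg (t : ℕ) (s : S) (b c : A i) : 0 ≤ mAux ρ P π i φ t s b c :=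
  Finset.sum_nonneg fun h _ => mul_nonneg
    (histProb_nonneg ρ P _ hρ.1 (fun t s a => (hP t s a).1) (modNM_nonneg ρ P π i φ hρ hπ hP hφ) t h s)
    ((hφ t h s b).1 c)

lemma mAux_sum (t : ℕ) (s : S) (b : A i) :
    ∑ c, mAux ρ P π i φ t s b c = stOcc ρ P (modNM i φ π) t s := by
  unfold mAux stOcc
  rw [Finset.sum_comm]
  refine Finset.sum_congr rfl fun h _ => ?_
  rw [← Finset.mul_sum, (hφ t h s b).2, mul_one]

lemma phibar_isMMod : IsMMod (phibar ρ P π i φ) := by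
  intro t s b
  constructor
  · intro c
    unfold phibar
    split
    · positivity
    · exact div_nonneg (mAux_nonneg ρ P π i φ hρ hπ hP hφ t s b c)
        (stOcc_nonneg ρ P _ hρ.1 (fun t s a => (hP t s a).1)
          (modNM_nonneg ρ P π i φ hρ hπ hP hφ) t s)
  · by_cases h0 : stOcc ρ P (modNM i φ π) t s = 0
    · simp [phibar, h0]
    · simp only [phibar, if_neg h0]
      rw [← Finset.sum_div, mAux_sum ρ P π i φ hρ hπ hP hφ, div_self h0]

lemma stOcc_mul_phibar (t : ℕ) (s : S) (b c : A i) :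
    stOcc ρ P (modNM i φ π) t s * phibar ρ P π i φ t s b c = mAux ρ P π i φ t s b c := by
  by_cases h0 : stOcc ρ P (modNM i φ π) t s = 0
  · rw [phibar, if_pos h0, h0, zero_mul]
    symm
    refine Finset.sum_eq_zero fun h hh => ?_
    have hz := (Finset.sum_eq_zero_iff_of_nonneg (fun h _ =>
      histProb_nonneg ρ P _ hρ.1 (fun t s a => (hP t s a).1)
        (modNM_nonneg ρ P π i φ hρ hπ hP hφ) t h s)).1 h0 h hh
    rw [hz, zero_mul]
  · rw [phibar, if_neg h0, mul_comm, div_mul_cancel₀ _ h0]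

/-- The occupancy of the non-Markovian modified policy factors through `mAux`. -/
lemma occ_modNM (t : ℕ) (s : S) (a : ∀ i, A i) :
    occ ρ P (modNM i φ π) t s a
      = ∑ b : A i, mAux ρ P π i φ t s b (a i) * π t s (Function.update a i b) := by
  unfold occ
  have hterm : ∀ h : Fin t → S × (∀ i, A i),
      histProb ρ P (modNM i φ π) t h s * modNM i φ π t h s a
        = ∑ b : A i, (histProb ρ P (modNM i φ π) t h s * φ t h s b (a i)) *
            π t s (Function.update a i b) := by
    intro h
    rw [modNM, Finset.mul_sum]
    exact Finset.sum_congr rfl fun b _ => by ring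
  simp only [hterm]
  rw [Finset.sum_comm]
  refine Finset.sum_congr rfl fun b _ => ?_
  rw [mAux, Finset.sum_mul]

end Aux

open MG in
/-- For any non-Markovian stochastic modification `φⁱ` there is a Markovian stochastic
modification `φ̄ⁱ` whose modified policy induces the same state-action occupancy
measures; consequently all reward and constraint values coincide. -/
theorem markovian_modification_exists_same_occupancy
    {S : Type} {ι : Type} {A : ι → Type}
    [Fintype S] [DecidableEq S] [Fintype ι] [DecidableEq ι]
    [∀ i, Fintype (A i)] [∀ i, DecidableEq (A i)] [∀ i, Nonempty (A i)]
    (ρ : S → ℝ) (P : ℕ → S → (∀ i, A i) → S → ℝ) (π : MPolicy S A)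
    (hρ : IsDist ρ) (hπ : IsMPolicy π) (hP : IsKernel P)
    (H J : ℕ) (r : ℕ → S → (∀ i, A i) → ℝ) (g : Fin J → ℕ → S → (∀ i, A i) → ℝ)
    (i : ι) (φ : NMMod S A i) (hφ : IsNMMod φ) :
    ∃ φbar : MMod S A i, IsMMod φbar ∧
      (∀ (t : ℕ) (s : S) (a : ∀ i, A i),
        occ ρ P (modNM i φ π) t s a = occ ρ P (lift (modM i φbar π)) t s a) ∧
      val ρ P H r (modNM i φ π) = val ρ P H r (lift (modM i φbar π)) ∧
      ∀ j, val ρ P H (g j) (modNM i φ π) = val ρ P H (g j) (lift (modM i φbar π)) := by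
  classical
  set φbar := phibar ρ P π i φ with hφb
  have hMM : IsMMod φbar := phibar_isMMod ρ P π i φ hρ hπ hP hφ
  have occ_of_st : ∀ t, (∀ s, stOcc ρ P (modNM i φ π) t s
        = stOcc ρ P (lift (modM i φbar π)) t s) →
      ∀ s a, occ ρ P (modNM i φ π) t s a = occ ρ P (lift (modM i φbar π)) t s a := by
    intro t hst s a
    rw [occ_modNM ρ P π i φ hρ hπ hP hφ, occ_lift, ← hst]
    show _ = stOcc ρ P (modNM i φ π) t s *
      ∑ b : A i, φbar t s b (a i) * π t s (Function.update a i b)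
    rw [Finset.mul_sum]
    refine Finset.sum_congr rfl fun b _ => ?_
    rw [← mul_assoc, hφb, stOcc_mul_phibar ρ P π i φ hρ hπ hP hφ]
  have main : ∀ t s, stOcc ρ P (modNM i φ π) t s
      = stOcc ρ P (lift (modM i φbar π)) t s := by
    intro t
    induction t with
    | zero => intro s; rw [stOcc_zero, stOcc_zero]
    | succ t ih =>
        intro s
        rw [stOcc_succ, stOcc_succ]
        refine Finset.sum_congr rfl fun s' _ => Finset.sum_congr rfl fun a _ => ?_
        rw [occ_of_st t ih s' a]
  have hocc : ∀ (t : ℕ) (s : S) (a : ∀ i, A i),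
      occ ρ P (modNM i φ π) t s a = occ ρ P (lift (modM i φbar π)) t s a :=
    fun t => occ_of_st t (main t)
  have hval : ∀ f : ℕ → S → (∀ i, A i) → ℝ,
      MG.val ρ P H f (modNM i φ π) = MG.val ρ P H f (lift (modM i φbar π)) := by
    intro f
    unfold MG.val
    refine Finset.sum_congr rfl fun t _ => Finset.sum_congr rfl fun s _ =>
      Finset.sum_congr rfl fun a _ => ?_
    rw [hocc t s a]
  exact ⟨φbar, hMM, hocc, hval r, fun j => hval (g j)⟩
end

section
/- In a finite-horizon Markov game with finite state and action spaces, for any player i and Markovian policy π, and any Markovian stochastic modification φ̄^i ∈ Φ^i_M, there exists a weight vector α ∈ Δ(K^i), where {φ^i(1), ..., φ^i(K^i)} enumerates the finite set Φ^i_{M,det} of Markovian deterministic modifications, such that d^{φ̄^i ∘ π}_t(s,a) = Σ_{k=1}^{K^i} α_k d^{φ^i(k) ∘ π}_t(s,a) for all (s,a) ∈ S × A and t ∈ [H]. Conversely, for every α ∈ Δ(K^i) there exists φ̄^i ∈ Φ^i_M with the same equality. -/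
open Finset

/-!
The occupancy measure of a Markovian policy `σ` factors as `ν^σ_t(s) σ_t(s, a)`, where `ν^σ` is
the law of the state. If `σ` plays, at every state, the mixture of policies `σ_k` weighted by
`α_k ν^{σ_k}_t(s)`, then induction on `t` gives `ν^σ = ∑ α_k ν^{σ_k}`, hence the same identity for
the occupancy measures. For modifications of `π` this holds as soon as, for `t < H`,
`∑_k α_k ν^k_t(s) [k(t, s, b) = c] = φ(t, s, b, c) ∑_k α_k ν^k_t(s)`.
Given `φ`, the product weights `α_k = ∏ φ(t, s, b, k(t, s, b))` satisfy this, because `ν^k_t` only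
depends on the values of `k` before time `t`. Given `α`, the identity defines `φ` wherever
`∑_k α_k ν^k_t(s) ≠ 0`, and nonnegativity makes the other states harmless.
-/

namespace MG

open Function

section StateDistribution

variable {S : Type} {ι : Type} {A : ι → Type}
variable [Fintype S] [Fintype ι] [DecidableEq ι] [∀ i, Fintype (A i)]

def stateDist (ρ : S → ℝ) (P : ℕ → S → (∀ i, A i) → S → ℝ) (σ : MPolicy S A) : ℕ → S → ℝ
  | 0 => ρ
  | t + 1 => fun s' => ∑ s, ∑ a, stateDist ρ P σ t s * σ t s a * P t s a s'

variable {ρ : S → ℝ} {P : ℕ → S → (∀ i, A i) → S → ℝ}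

theorem sum_histProb_lift (σ : MPolicy S A) (t : ℕ) (s : S) :
    ∑ h : Fin t → S × (∀ i, A i), histProb ρ P (lift σ) t h s = stateDist ρ P σ t s := by
  induction t generalizing s with
  | zero => simp [histProb, stateDist]
  | succ t ih =>
    rw [← (Fin.snocEquiv fun _ => S × (∀ i, A i)).sum_comp, Fintype.sum_prod_type,
      stateDist, Fintype.sum_prod_type]
    refine Finset.sum_congr rfl fun s₀ _ => Finset.sum_congr rfl fun a _ => ?_
    simp only [histProb, Fin.snocEquiv, Equiv.coe_fn_mk, Fin.snoc_castSucc, Fin.snoc_last]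
    rw [← ih, Finset.sum_mul, Finset.sum_mul]
    rfl

theorem occ_lift (σ : MPolicy S A) (t : ℕ) (s : S) (a : ∀ i, A i) :
    occ ρ P (lift σ) t s a = stateDist ρ P σ t s * σ t s a := by
  rw [occ, ← sum_histProb_lift, Finset.sum_mul]
  rfl

theorem stateDist_nonneg {σ : MPolicy S A} (hρ : ∀ s, 0 ≤ ρ s)
    (hP : ∀ t s a s', 0 ≤ P t s a s') (hσ : ∀ t s a, 0 ≤ σ t s a) (t : ℕ) (s : S) :
    0 ≤ stateDist ρ P σ t s := by
  induction t generalizing s with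
  | zero => exact hρ s
  | succ t ih =>
    exact Finset.sum_nonneg fun _ _ => Finset.sum_nonneg fun _ _ =>
      mul_nonneg (mul_nonneg (ih _) (hσ _ _ _)) (hP _ _ _ _)

theorem stateDist_congr {σ σ' : MPolicy S A} {t : ℕ} (h : ∀ t' < t, σ t' = σ' t') :
    stateDist ρ P σ t = stateDist ρ P σ' t := by
  induction t with
  | zero => rfl
  | succ t ih =>
    funext s'
    simp only [stateDist, ih fun t' ht' => h t' (ht'.trans t.lt_succ_self), h t t.lt_succ_self]

theorem stateDist_eq_sum_of_mixture {κ : Type} [Fintype κ] {σ : MPolicy S A}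
    {σs : κ → MPolicy S A} {α : κ → ℝ} (hα : ∑ k, α k = 1) {H : ℕ}
    (hmix : ∀ t < H, ∀ s a, (∑ k, α k * stateDist ρ P (σs k) t s) * σ t s a =
      ∑ k, α k * (stateDist ρ P (σs k) t s * σs k t s a)) :
    ∀ t ≤ H, ∀ s, stateDist ρ P σ t s = ∑ k, α k * stateDist ρ P (σs k) t s := by
  intro t
  induction t with
  | zero => intro _ s; simp [stateDist, ← Finset.sum_mul, hα]
  | succ t ih =>
    intro ht s'
    have ht' : t < H := ht
    simp only [stateDist, ih ht'.le, hmix t ht', Finset.sum_mul, Finset.mul_sum]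
    conv_rhs => rw [Finset.sum_comm]; enter [2, s]; rw [Finset.sum_comm]
    simp only [mul_assoc]

theorem occ_eq_sum_of_mixture {κ : Type} [Fintype κ] {σ : MPolicy S A}
    {σs : κ → MPolicy S A} {α : κ → ℝ} (hα : ∑ k, α k = 1) {H : ℕ}
    (hmix : ∀ t < H, ∀ s a, (∑ k, α k * stateDist ρ P (σs k) t s) * σ t s a =
      ∑ k, α k * (stateDist ρ P (σs k) t s * σs k t s a)) :
    ∀ t < H, ∀ s a, occ ρ P (lift σ) t s a = ∑ k, α k * occ ρ P (lift (σs k)) t s a := by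
  intro t ht s a
  simp only [occ_lift, stateDist_eq_sum_of_mixture hα hmix t ht.le, hmix t ht]

end StateDistribution

/-- The marginal of a product of probability vectors: a factor `F` that does not depend on the
coordinate `j₀` is independent of it. -/
theorem sum_prod_mul_ite_eq {J V : Type} [Fintype J] [DecidableEq J] [Fintype V] [DecidableEq V]
    {W : J → V → ℝ} (hW : ∀ j, ∑ v, W j v = 1) {j₀ : J} {F : (J → V) → ℝ}
    (hF : ∀ g g' : J → V, (∀ j ≠ j₀, g j = g' j) → F g = F g') (c : V) :
    ∑ g : J → V, (∏ j, W j (g j)) * F g * (if c = g j₀ then 1 else 0) =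
      W j₀ c * ∑ g : J → V, (∏ j, W j (g j)) * F g := by
  set e := (Equiv.funSplitAt j₀ V).symm
  have hFc : ∀ v r, F (e (v, r)) = F (e (c, r)) := fun v r =>
    hF _ _ fun j hj => by simp [e, Equiv.funSplitAt, Equiv.piSplitAt, hj]
  have he₀ : ∀ v r, e (v, r) j₀ = v := fun v r => by simp [e, Equiv.funSplitAt, Equiv.piSplitAt]
  have he : ∀ v r (j : {j // j ≠ j₀}), e (v, r) j = r j := fun v r j => by
    simp [e, Equiv.funSplitAt, Equiv.piSplitAt, j.2]
  simp only [← e.sum_comp, Fintype.sum_prod_type, Fintype.prod_eq_mul_prod_subtype_ne _ j₀, hFc,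
    he₀, he, mul_assoc, ← Finset.mul_sum, mul_ite, mul_one, mul_zero, ← Finset.sum_mul, hW,
    one_mul, Finset.sum_ite_irrel, Finset.sum_const_zero, Finset.sum_ite_eq, Finset.mem_univ,
    if_true]

section DeterministicModifications

variable {S : Type} {ι : Type} {A : ι → Type} [∀ i, DecidableEq (A i)] {H : ℕ} {i : ι}

def detAct (k : DMod S A H i) (t : ℕ) (s : S) (b : A i) : A i :=
  if h : t < H then k ⟨t, h⟩ s b else b

theorem detToM_eq_ite (k : DMod S A H i) (t : ℕ) (s : S) (b c : A i) :
    detToM k t s b c = if c = detAct k t s b then 1 else 0 := by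
  unfold detToM detAct
  split_ifs <;> rfl

theorem detToM_nonneg (k : DMod S A H i) (t : ℕ) (s : S) (b c : A i) :
    0 ≤ detToM k t s b c := by
  rw [detToM_eq_ite]
  split_ifs <;> norm_num

def curryDMod (H : ℕ) (i : ι) : ((Fin H × S × A i) → A i) ≃ DMod S A H i where
  toFun g t s b := g (t, s, b)
  invFun k j := k j.1 j.2.1 j.2.2
  left_inv _ := rfl
  right_inv _ := rfl

variable [∀ i, Fintype (A i)]

theorem modM_detToM [DecidableEq ι] (π : MPolicy S A) (k : DMod S A H i) (t : ℕ) (s : S)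
    (a : ∀ i, A i) :
    modM i (detToM k) π t s a =
      ∑ b, if a i = detAct k t s b then π t s (update a i b) else 0 := by
  simp only [modM, detToM_eq_ite, ite_mul, one_mul, zero_mul]

theorem modM_detToM_nonneg [DecidableEq ι] {π : MPolicy S A} (hπ : ∀ t s a, 0 ≤ π t s a)
    (k : DMod S A H i) (t : ℕ) (s : S) (a : ∀ i, A i) : 0 ≤ modM i (detToM k) π t s a :=
  Finset.sum_nonneg fun _ _ => mul_nonneg (detToM_nonneg k _ _ _ _) (hπ _ _ _)

variable [Fintype S]

/-- The weight of `k` when the actions `k t s b` are drawn independently from `φ t s b`. -/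
def productWeight (φ : MMod S A i) (k : DMod S A H i) : ℝ :=
  ∏ j : Fin H × S × A i, φ j.1 j.2.1 j.2.2 (k j.1 j.2.1 j.2.2)

theorem sum_productWeight [DecidableEq S] {φ : MMod S A i} (hφ : IsMMod φ) :
    ∑ k : DMod S A H i, productWeight φ k = 1 := by
  rw [← (curryDMod H i).sum_comp]
  exact (Fintype.prod_sum fun (j : Fin H × S × A i) v => φ j.1 j.2.1 j.2.2 v).symm.trans
    (Finset.prod_eq_one fun j _ => (hφ _ _ _).2)

theorem stateDist_modM_detToM_congr [Fintype ι] [DecidableEq ι] {ρ : S → ℝ}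
    {P : ℕ → S → (∀ i, A i) → S → ℝ} {π : MPolicy S A} {k k' : DMod S A H i} {t : ℕ}
    (h : ∀ t' : Fin H, (t' : ℕ) < t → k t' = k' t') :
    stateDist ρ P (modM i (detToM k) π) t = stateDist ρ P (modM i (detToM k') π) t := by
  refine stateDist_congr fun t' ht' => ?_
  funext s a
  simp only [modM_detToM, detAct]
  split_ifs with hH
  · rw [h ⟨t', hH⟩ ht']
  · rfl

end DeterministicModifications

section Mixtures

variable {S : Type} {ι : Type} {A : ι → Type}
variable [Fintype S] [DecidableEq S] [Fintype ι] [DecidableEq ι]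
variable [∀ i, Fintype (A i)] [∀ i, DecidableEq (A i)] {H : ℕ} {i : ι}
variable (ρ : S → ℝ) (P : ℕ → S → (∀ i, A i) → S → ℝ) (π : MPolicy S A)

def mixedState (α : DMod S A H i → ℝ) (t : ℕ) (s : S) : ℝ :=
  ∑ k, α k * stateDist ρ P (modM i (detToM k) π) t s

/-- Unnormalised probability, under the `α`-mixture of the deterministic modifications of `π`,
of being at `s` at time `t` and of replacing `b` by `c`. -/
def mixedChoice (α : DMod S A H i → ℝ) (t : ℕ) (s : S) (b c : A i) : ℝ :=
  ∑ k, α k * stateDist ρ P (modM i (detToM k) π) t s * if c = detAct k t s b then 1 else 0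

/-- The conditional law of the replacement of `b` given the state, under the `α`-mixture
(the identity at states the mixture never reaches). -/
noncomputable def mixedModification (α : DMod S A H i → ℝ) : MMod S A i := fun t s b c =>
  if mixedState ρ P π α t s = 0 then (if c = b then 1 else 0)
  else mixedChoice ρ P π α t s b c / mixedState ρ P π α t s

variable {ρ P π}

theorem occ_modM_eq_sum_of_mixedChoice {α : DMod S A H i → ℝ} (hα : ∑ k, α k = 1)
    {φ : MMod S A i}
    (hφ : ∀ t < H, ∀ s b c, mixedChoice ρ P π α t s b c = φ t s b c * mixedState ρ P π α t s) :
    ∀ t < H, ∀ s a,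
      occ ρ P (lift (modM i φ π)) t s a = ∑ k, α k * occ ρ P (lift (modM i (detToM k) π)) t s a := by
  refine occ_eq_sum_of_mixture hα fun t ht s a => ?_
  calc (∑ k, α k * stateDist ρ P (modM i (detToM k) π) t s) * modM i φ π t s a
      = ∑ b, mixedChoice ρ P π α t s b (a i) * π t s (update a i b) := by
        rw [modM, Finset.mul_sum]
        refine Finset.sum_congr rfl fun b _ => ?_
        rw [hφ t ht, mixedState]
        ring
    _ = ∑ k, α k * (stateDist ρ P (modM i (detToM k) π) t s * modM i (detToM k) π t s a) := by
        simp only [mixedChoice, modM_detToM, Finset.sum_mul, Finset.mul_sum]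
        rw [Finset.sum_comm]
        refine Finset.sum_congr rfl fun _ _ => Finset.sum_congr rfl fun _ _ => ?_
        split_ifs <;> ring

/-- Under `productWeight φ` the state at time `t` only depends on the draws for earlier times,
so it is independent of the draw `k t s b`, whose law is `φ t s b`. -/
theorem mixedChoice_productWeight {φ : MMod S A i} (hφ : IsMMod φ) :
    ∀ t < H, ∀ s b c, mixedChoice ρ P π (productWeight (H := H) φ) t s b c =
      φ t s b c * mixedState ρ P π (productWeight (H := H) φ) t s := by
  intro t ht s b c
  have hdet : ∀ g, detAct (curryDMod (S := S) (A := A) H i g) t s b = g (⟨t, ht⟩, s, b) :=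
    fun g => dif_pos ht
  simp only [mixedChoice, mixedState, ← (curryDMod (S := S) (A := A) H i).sum_comp, hdet]
  refine sum_prod_mul_ite_eq (J := Fin H × S × A i) (V := A i)
    (W := fun j v => φ j.1 j.2.1 j.2.2 v) (fun j => (hφ _ _ _).2)
    (F := fun g => stateDist ρ P (modM i (detToM (curryDMod H i g)) π) t s)
    (fun g g' hgg' => ?_) c
  refine congrFun (stateDist_modM_detToM_congr fun t' ht' => ?_) s
  funext s' b'
  refine hgg' _ fun h => ?_
  simp only [Prod.mk.injEq, Fin.ext_iff] at h
  omega

theorem sum_mixedChoice (α : DMod S A H i → ℝ) (t : ℕ) (s : S) (b : A i) :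
    ∑ c, mixedChoice ρ P π α t s b c = mixedState ρ P π α t s := by
  simp only [mixedChoice, mixedState]
  rw [Finset.sum_comm]
  simp

theorem mixedChoice_nonneg (hρ : IsDist ρ) (hP : IsKernel P) (hπ : IsMPolicy π)
    {α : DMod S A H i → ℝ} (hα : ∀ k, 0 ≤ α k) (t : ℕ) (s : S) (b c : A i) :
    0 ≤ mixedChoice ρ P π α t s b c := by
  refine Finset.sum_nonneg fun k _ => mul_nonneg (mul_nonneg (hα k) ?_) (by positivity)
  exact stateDist_nonneg hρ.1 (fun t s a => (hP t s a).1)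
    (modM_detToM_nonneg (fun t s => (hπ t s).1) k) t s

theorem mixedChoice_eq_mixedModification_mul (hρ : IsDist ρ) (hP : IsKernel P)
    (hπ : IsMPolicy π) {α : DMod S A H i → ℝ} (hα : ∀ k, 0 ≤ α k) (t : ℕ) (s : S) (b c : A i) :
    mixedChoice ρ P π α t s b c = mixedModification ρ P π α t s b c * mixedState ρ P π α t s := by
  by_cases h0 : mixedState ρ P π α t s = 0
  · rw [h0, mul_zero]
    refine le_antisymm ?_ (mixedChoice_nonneg hρ hP hπ hα t s b c)
    rw [← h0, ← sum_mixedChoice α t s b]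
    exact Finset.single_le_sum (fun c _ => mixedChoice_nonneg hρ hP hπ hα t s b c)
      (Finset.mem_univ c)
  · rw [mixedModification, if_neg h0, div_mul_cancel₀ _ h0]

theorem isMMod_mixedModification (hρ : IsDist ρ) (hP : IsKernel P) (hπ : IsMPolicy π)
    {α : DMod S A H i → ℝ} (hα : ∀ k, 0 ≤ α k) : IsMMod (mixedModification ρ P π α) := by
  intro t s b
  by_cases h0 : mixedState ρ P π α t s = 0
  · simp only [IsDist, mixedModification, if_pos h0]
    exact ⟨fun c => by positivity, by simp⟩
  · simp only [IsDist, mixedModification, if_neg h0]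
    refine ⟨fun c => div_nonneg (mixedChoice_nonneg hρ hP hπ hα t s b c) ?_, ?_⟩
    · rw [← sum_mixedChoice α t s b]
      exact Finset.sum_nonneg fun c _ => mixedChoice_nonneg hρ hP hπ hα t s b c
    · rw [← Finset.sum_div, sum_mixedChoice, div_self h0]

end Mixtures

end MG

open MG in
theorem markovian_modification_convex_combination_deterministic_general
    {S : Type} {ι : Type} {A : ι → Type}
    [Fintype S] [DecidableEq S] [Fintype ι] [DecidableEq ι]
    [∀ i, Fintype (A i)] [∀ i, DecidableEq (A i)]
    (ρ : S → ℝ) (P : ℕ → S → (∀ i, A i) → S → ℝ) (π : MPolicy S A)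
    (hρ : IsDist ρ) (hπ : IsMPolicy π) (hP : IsKernel P)
    (H : ℕ) (i : ι) :
    (∀ φbar : MMod S A i, IsMMod φbar →
      ∃ α : DMod S A H i → ℝ, (∀ k, 0 ≤ α k) ∧ (∑ k, α k = 1) ∧
        ∀ t < H, ∀ (s : S) (a : ∀ i, A i),
          occ ρ P (lift (modM i φbar π)) t s a =
            ∑ k, α k * occ ρ P (lift (modM i (detToM k) π)) t s a) ∧
    (∀ α : DMod S A H i → ℝ, (∀ k, 0 ≤ α k) → (∑ k, α k = 1) →
      ∃ φbar : MMod S A i, IsMMod φbar ∧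
        ∀ t < H, ∀ (s : S) (a : ∀ i, A i),
          occ ρ P (lift (modM i φbar π)) t s a =
            ∑ k, α k * occ ρ P (lift (modM i (detToM k) π)) t s a) := by
  refine ⟨fun φ hφ => ⟨productWeight φ, ?_, sum_productWeight hφ, ?_⟩,
    fun α hα hα₁ => ⟨mixedModification ρ P π α, isMMod_mixedModification hρ hP hπ hα, ?_⟩⟩
  · exact fun k => Finset.prod_nonneg fun j _ => (hφ _ _ _).1 _
  · exact occ_modM_eq_sum_of_mixedChoice (sum_productWeight hφ) (mixedChoice_productWeight hφ)
  · exact occ_modM_eq_sum_of_mixedChoice hα₁ fun t _ s b c =>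
      mixedChoice_eq_mixedModification_mul hρ hP hπ hα t s b c

open MG in
/-- The occupancy measure of a Markovian stochastic modification equals a convex
combination of occupancy measures of Markovian deterministic modifications, and
conversely every such convex combination is realized by a Markovian stochastic
modification. -/
theorem markovian_modification_convex_combination_deterministic
    {S : Type} {ι : Type} {A : ι → Type}
    [Fintype S] [DecidableEq S] [Fintype ι] [DecidableEq ι]
    [∀ i, Fintype (A i)] [∀ i, DecidableEq (A i)] [∀ i, Nonempty (A i)]
    (ρ : S → ℝ) (P : ℕ → S → (∀ i, A i) → S → ℝ) (π : MPolicy S A)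
    (hρ : IsDist ρ) (hπ : IsMPolicy π) (hP : IsKernel P)
    (H : ℕ) (i : ι) :
    (∀ φbar : MMod S A i, IsMMod φbar →
      ∃ α : DMod S A H i → ℝ, (∀ k, 0 ≤ α k) ∧ (∑ k, α k = 1) ∧
        ∀ t < H, ∀ (s : S) (a : ∀ i, A i),
          occ ρ P (lift (modM i φbar π)) t s a =
            ∑ k, α k * occ ρ P (lift (modM i (detToM k) π)) t s a) ∧
    (∀ α : DMod S A H i → ℝ, (∀ k, 0 ≤ α k) → (∑ k, α k = 1) →
      ∃ φbar : MMod S A i, IsMMod φbar ∧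
        ∀ t < H, ∀ (s : S) (a : ∀ i, A i),
          occ ρ P (lift (modM i φbar π)) t s a =
            ∑ k, α k * occ ρ P (lift (modM i (detToM k) π)) t s a) :=
  markovian_modification_convex_combination_deterministic_general ρ P π hρ hπ hP H i
end

section
/- In an unconstrained finite-horizon Markov game, a Markovian policy π is a correlated equilibrium (robust to all non-Markovian stochastic modifications) if and only if for every player i, V^{r^i}(π) ≥ max over Markovian deterministic modifications φ^i ∈ Φ^i_{M,det} of V^{r^i}(φ^i ∘ π). -/
open Finset

/-!
Fix a player `i`. Against the recommendations of `π`, player `i` faces a finite-horizon MDP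
whose state is the pair (state, recommended action) and whose action is the action actually
played; a non-Markovian modification is a history-dependent policy of this MDP, a Markovian
deterministic one a deterministic Markov policy. Backward induction gives its optimal value
`V`, and the telescoping identity
`val σ = ∑ ρ V₀ + ∑ₜ E_σ[(T_σ V)ₜ - Vₜ]`
(with `T_σ` the one-step lookahead of `σ`) shows that every modification earns at most
`∑ ρ V₀`, while the greedy deterministic Markov modification attains it.
-/

theorem Fin.sum_tuple_succ {X M : Type*} [Fintype X] [AddCommMonoid M] (t : ℕ)
    (F : (Fin (t + 1) → X) → M) :
    ∑ h, F h = ∑ h : Fin t → X, ∑ x, F (Fin.snoc h x) := by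
  rw [← Fintype.sum_equiv (Fin.snocEquiv fun _ => X) (fun p => F (Fin.snoc p.2 p.1)) F
    fun _ => rfl, Fintype.sum_prod_type, Finset.sum_comm]

namespace MG

open Finset

variable {S ι : Type} {A : ι → Type}

def detMod [∀ i, DecidableEq (A i)] {i : ι} (k : ℕ → S → A i → A i) : MMod S A i :=
  fun t s b c => if c = k t s b then 1 else 0

theorem isMMod_detMod [∀ i, Fintype (A i)] [∀ i, DecidableEq (A i)] {i : ι}
    (k : ℕ → S → A i → A i) : IsMMod (detMod k) := fun t s b =>
  ⟨fun c => by unfold detMod; split_ifs <;> norm_num, by simp [detMod]⟩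

theorem modNM_mliftMod [DecidableEq ι] [∀ i, Fintype (A i)] (i : ι) (φ : MMod S A i)
    (π : MPolicy S A) :
    modNM i (mliftMod φ) π = lift (modM i φ π) := rfl

theorem modNM_nonneg [Fintype ι] [DecidableEq ι] [∀ i, Fintype (A i)] {π : MPolicy S A}
    (hπ : IsMPolicy π) {i : ι} {φ : NMMod S A i} (hφ : IsNMMod φ) (t : ℕ)
    (h : Fin t → S × (∀ i, A i)) (s : S) (a : ∀ j, A j) :
    0 ≤ modNM i φ π t h s a :=
  sum_nonneg fun b _ => mul_nonneg ((hφ t h s b).1 _) ((hπ t s).1 _)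

theorem histProb_nonneg {ρ : S → ℝ} {P : ℕ → S → (∀ i, A i) → S → ℝ} {σ : HPolicy S A}
    (hρ : ∀ s, 0 ≤ ρ s) (hP : ∀ t s a s', 0 ≤ P t s a s')
    (hσ : ∀ t h s a, 0 ≤ σ t h s a) :
    ∀ t h s, 0 ≤ histProb ρ P σ t h s
  | 0, _, s => hρ s
  | t + 1, _, _ =>
    mul_nonneg (mul_nonneg (histProb_nonneg hρ hP hσ t _ _) (hσ _ _ _ _)) (hP _ _ _ _)

theorem histProb_snoc (ρ : S → ℝ) (P : ℕ → S → (∀ i, A i) → S → ℝ) (σ : HPolicy S A)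
    (t : ℕ) (h : Fin t → S × (∀ i, A i)) (x : S × (∀ i, A i)) (s : S) :
    histProb ρ P σ (t + 1) (Fin.snoc h x) s
      = histProb ρ P σ t h x.1 * σ t h x.1 x.2 * P t x.1 x.2 s := by
  simp [histProb, Fin.snoc_castSucc, Fin.snoc_last]

variable [Fintype S] [Fintype ι] [DecidableEq ι] [∀ i, Fintype (A i)]

def bellmanOp (P : ℕ → S → (∀ i, A i) → S → ℝ) (σ : HPolicy S A)
    (f : ℕ → S → (∀ i, A i) → ℝ) (W : ℕ → S → ℝ) (t : ℕ) (h : Fin t → S × (∀ i, A i))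
    (s : S) : ℝ :=
  ∑ a, σ t h s a * (f t s a + ∑ s', P t s a s' * W (t + 1) s')

theorem sum_histProb_mul_bellmanOp (ρ : S → ℝ) (P : ℕ → S → (∀ i, A i) → S → ℝ)
    (σ : HPolicy S A) (f : ℕ → S → (∀ i, A i) → ℝ) (W : ℕ → S → ℝ) (t : ℕ) :
    ∑ h, ∑ s, histProb ρ P σ t h s * bellmanOp P σ f W t h s
      = ∑ s, ∑ a, occ ρ P σ t s a * f t s a
        + ∑ h, ∑ s, histProb ρ P σ (t + 1) h s * W (t + 1) s := by
  rw [Fin.sum_tuple_succ]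
  simp only [histProb_snoc, Fintype.sum_prod_type, bellmanOp, occ, mul_add, mul_sum,
    sum_mul, sum_add_distrib, mul_assoc]
  congr 1
  rw [sum_comm]
  exact sum_congr rfl fun _ _ => sum_comm

theorem sum_occ_add_sum_histProb_eq (ρ : S → ℝ) (P : ℕ → S → (∀ i, A i) → S → ℝ)
    (σ : HPolicy S A) (f : ℕ → S → (∀ i, A i) → ℝ) (W : ℕ → S → ℝ) (n : ℕ) :
    ∑ t ∈ range n, ∑ s, ∑ a, occ ρ P σ t s a * f t s a
        + ∑ h, ∑ s, histProb ρ P σ n h s * W n s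
      = ∑ s, ρ s * W 0 s + ∑ t ∈ range n, ∑ h, ∑ s,
          histProb ρ P σ t h s * (bellmanOp P σ f W t h s - W t s) := by
  induction n with
  | zero => simp [histProb]
  | succ n ih =>
    have hstep := sum_histProb_mul_bellmanOp ρ P σ f W n
    have hsplit : ∑ h, ∑ s, histProb ρ P σ n h s * (bellmanOp P σ f W n h s - W n s)
        = ∑ h, ∑ s, histProb ρ P σ n h s * bellmanOp P σ f W n h s
          - ∑ h, ∑ s, histProb ρ P σ n h s * W n s := by
      simp only [mul_sub, sum_sub_distrib]
    rw [sum_range_succ, sum_range_succ, hsplit]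
    linarith

theorem val_eq_add_sum_bellman_residual (ρ : S → ℝ) (P : ℕ → S → (∀ i, A i) → S → ℝ)
    (σ : HPolicy S A) (f : ℕ → S → (∀ i, A i) → ℝ) {H : ℕ} {W : ℕ → S → ℝ}
    (hW : ∀ s, W H s = 0) :
    val ρ P H f σ = ∑ s, ρ s * W 0 s + ∑ t ∈ range H, ∑ h, ∑ s,
      histProb ρ P σ t h s * (bellmanOp P σ f W t h s - W t s) := by
  rw [← sum_occ_add_sum_histProb_eq, val]
  simp [hW]

variable [∀ i, DecidableEq (A i)]

/-- Player `i`'s one-step value (payoff `f` plus continuation `V`) of playing `c` when `π`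
recommends `b`, weighted by the probability of that recommendation rather than conditioned
on it. -/
def devQ (P : ℕ → S → (∀ i, A i) → S → ℝ) (π : MPolicy S A) (f : ℕ → S → (∀ i, A i) → ℝ)
    (i : ι) (t : ℕ) (V : S → ℝ) (s : S) (b c : A i) : ℝ :=
  ∑ a, if a i = c then π t s (Function.update a i b) * (f t s a + ∑ s', P t s a s' * V s')
    else 0

theorem bellmanOp_modNM (P : ℕ → S → (∀ i, A i) → S → ℝ) (π : MPolicy S A)
    (f : ℕ → S → (∀ i, A i) → ℝ) (i : ι) (φ : NMMod S A i) (W : ℕ → S → ℝ) (t : ℕ)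
    (h : Fin t → S × (∀ i, A i)) (s : S) :
    bellmanOp P (modNM i φ π) f W t h s
      = ∑ b, ∑ c, φ t h s b c * devQ P π f i t (W (t + 1)) s b c := by
  simp only [bellmanOp, modNM, devQ, sum_mul, mul_sum, mul_ite, mul_zero]
  rw [sum_comm]
  refine sum_congr rfl fun b _ => ?_
  rw [sum_comm]
  simp [mul_assoc]

variable [∀ i, Nonempty (A i)]

def optDevValue (P : ℕ → S → (∀ i, A i) → S → ℝ) (π : MPolicy S A)
    (f : ℕ → S → (∀ i, A i) → ℝ) (i : ι) (H t : ℕ) : S → ℝ :=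
  if t < H then fun s =>
    ∑ b, univ.sup' univ_nonempty (devQ P π f i t (optDevValue P π f i H (t + 1)) s b)
  else 0
termination_by H - t

theorem optDevValue_of_lt {P : ℕ → S → (∀ i, A i) → S → ℝ} {π : MPolicy S A}
    {f : ℕ → S → (∀ i, A i) → ℝ} {i : ι} {H t : ℕ} (ht : t < H) (s : S) :
    optDevValue P π f i H t s
      = ∑ b, univ.sup' univ_nonempty (devQ P π f i t (optDevValue P π f i H (t + 1)) s b) := by
  rw [optDevValue, if_pos ht]

theorem optDevValue_self (P : ℕ → S → (∀ i, A i) → S → ℝ) (π : MPolicy S A)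
    (f : ℕ → S → (∀ i, A i) → ℝ) (i : ι) (H : ℕ) (s : S) :
    optDevValue P π f i H H s = 0 := by
  rw [optDevValue, if_neg (lt_irrefl H)]
  rfl

noncomputable def greedyDev (P : ℕ → S → (∀ i, A i) → S → ℝ) (π : MPolicy S A)
    (f : ℕ → S → (∀ i, A i) → ℝ) (i : ι) (H t : ℕ) (s : S) (b : A i) : A i :=
  (exists_mem_eq_sup' univ_nonempty
    (devQ P π f i t (optDevValue P π f i H (t + 1)) s b)).choose

theorem sup'_devQ_eq_greedyDev (P : ℕ → S → (∀ i, A i) → S → ℝ) (π : MPolicy S A)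
    (f : ℕ → S → (∀ i, A i) → ℝ) (i : ι) (H t : ℕ) (s : S) (b : A i) :
    univ.sup' univ_nonempty (devQ P π f i t (optDevValue P π f i H (t + 1)) s b)
      = devQ P π f i t (optDevValue P π f i H (t + 1)) s b (greedyDev P π f i H t s b) :=
  (exists_mem_eq_sup' univ_nonempty
    (devQ P π f i t (optDevValue P π f i H (t + 1)) s b)).choose_spec.2

theorem bellmanOp_modNM_le_optDevValue (P : ℕ → S → (∀ i, A i) → S → ℝ) (π : MPolicy S A)
    (f : ℕ → S → (∀ i, A i) → ℝ) {i : ι} {φ : NMMod S A i} (hφ : IsNMMod φ) {H t : ℕ}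
    (ht : t < H) (h : Fin t → S × (∀ i, A i)) (s : S) :
    bellmanOp P (modNM i φ π) f (optDevValue P π f i H) t h s ≤ optDevValue P π f i H t s := by
  rw [bellmanOp_modNM, optDevValue_of_lt ht]
  refine sum_le_sum fun b _ => ?_
  set Q := devQ P π f i t (optDevValue P π f i H (t + 1)) s b
  calc ∑ c, φ t h s b c * Q c ≤ ∑ c, φ t h s b c * univ.sup' univ_nonempty Q :=
        sum_le_sum fun c _ =>
          mul_le_mul_of_nonneg_left (le_sup' Q (mem_univ c)) ((hφ t h s b).1 c)
    _ = univ.sup' univ_nonempty Q := by rw [← sum_mul, (hφ t h s b).2, one_mul]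

theorem bellmanOp_greedyDev (P : ℕ → S → (∀ i, A i) → S → ℝ) (π : MPolicy S A)
    (f : ℕ → S → (∀ i, A i) → ℝ) (i : ι) {H t : ℕ} (ht : t < H)
    (h : Fin t → S × (∀ i, A i)) (s : S) :
    bellmanOp P (modNM i (mliftMod (detMod (greedyDev P π f i H))) π) f
        (optDevValue P π f i H) t h s = optDevValue P π f i H t s := by
  rw [bellmanOp_modNM, optDevValue_of_lt ht]
  refine sum_congr rfl fun b _ => ?_
  simp [mliftMod, detMod, sup'_devQ_eq_greedyDev]

theorem val_modNM_le_optDevValue {ρ : S → ℝ} {P : ℕ → S → (∀ i, A i) → S → ℝ}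
    {π : MPolicy S A} (hρ : ∀ s, 0 ≤ ρ s) (hP : ∀ t s a s', 0 ≤ P t s a s')
    (hπ : IsMPolicy π) (H : ℕ) (f : ℕ → S → (∀ i, A i) → ℝ) {i : ι} {φ : NMMod S A i}
    (hφ : IsNMMod φ) :
    val ρ P H f (modNM i φ π) ≤ ∑ s, ρ s * optDevValue P π f i H 0 s := by
  rw [val_eq_add_sum_bellman_residual ρ P _ f (optDevValue_self P π f i H)]
  refine add_le_of_nonpos_right (sum_nonpos fun t ht => sum_nonpos fun h _ =>
    sum_nonpos fun s _ => mul_nonpos_of_nonneg_of_nonpos ?_ ?_)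
  · exact histProb_nonneg hρ hP (modNM_nonneg hπ hφ) t h s
  · exact sub_nonpos.2 (bellmanOp_modNM_le_optDevValue P π f hφ (mem_range.1 ht) h s)

theorem val_greedyDev (ρ : S → ℝ) (P : ℕ → S → (∀ i, A i) → S → ℝ) (π : MPolicy S A)
    (H : ℕ) (f : ℕ → S → (∀ i, A i) → ℝ) (i : ι) :
    val ρ P H f (lift (modM i (detMod (greedyDev P π f i H)) π))
      = ∑ s, ρ s * optDevValue P π f i H 0 s := by
  rw [← modNM_mliftMod, val_eq_add_sum_bellman_residual ρ P _ f (optDevValue_self P π f i H)]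
  refine add_eq_left.2
    (sum_eq_zero fun t ht => sum_eq_zero fun h _ => sum_eq_zero fun s _ => ?_)
  rw [bellmanOp_greedyDev P π f i (mem_range.1 ht), sub_self, mul_zero]

end MG

open MG in
theorem correlated_equilibrium_iff_markov_deterministic_general
    {S : Type} {ι : Type} {A : ι → Type}
    [Fintype S] [Fintype ι] [DecidableEq ι]
    [∀ i, Fintype (A i)] [∀ i, DecidableEq (A i)] [∀ i, Nonempty (A i)]
    (ρ : S → ℝ) (P : ℕ → S → (∀ i, A i) → S → ℝ) (π : MPolicy S A)
    (hρ : IsDist ρ) (hπ : IsMPolicy π) (hP : IsKernel P)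
    (H : ℕ) (r : ι → ℕ → S → (∀ i, A i) → ℝ) :
    (∀ (i : ι) (φ : NMMod S A i), IsNMMod φ →
        val ρ P H (r i) (modNM i φ π) ≤ val ρ P H (r i) (lift π)) ↔
    (∀ (i : ι) (k : ℕ → S → A i → A i),
        val ρ P H (r i)
            (lift (modM i (fun t s b c => if c = k t s b then 1 else 0) π)) ≤
          val ρ P H (r i) (lift π)) := by
  refine ⟨fun hce i k => ?_, fun hdet i φ hφ => ?_⟩
  · exact modNM_mliftMod i (detMod k) π ▸ hce i _ fun t _ s b => isMMod_detMod k t s b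
  · calc val ρ P H (r i) (modNM i φ π)
        ≤ ∑ s, ρ s * optDevValue P π (r i) i H 0 s :=
          val_modNM_le_optDevValue hρ.1 (fun t s a => (hP t s a).1) hπ H (r i) hφ
      _ = val ρ P H (r i) (lift (modM i (detMod (greedyDev P π (r i) i H)) π)) :=
          (val_greedyDev ρ P π H (r i) i).symm
      _ ≤ val ρ P H (r i) (lift π) := hdet i _

open MG in
/-- In an unconstrained finite-horizon Markov game, a Markovian policy is a correlated
equilibrium (robust to all non-Markovian stochastic modifications) if and only if it is
robust to all Markovian deterministic modifications. -/
theorem correlated_equilibrium_iff_markov_deterministic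
    {S : Type} {ι : Type} {A : ι → Type}
    [Fintype S] [DecidableEq S] [Fintype ι] [DecidableEq ι]
    [∀ i, Fintype (A i)] [∀ i, DecidableEq (A i)] [∀ i, Nonempty (A i)]
    (ρ : S → ℝ) (P : ℕ → S → (∀ i, A i) → S → ℝ) (π : MPolicy S A)
    (hρ : IsDist ρ) (hπ : IsMPolicy π) (hP : IsKernel P)
    (H : ℕ) (r : ι → ℕ → S → (∀ i, A i) → ℝ) :
    (∀ (i : ι) (φ : NMMod S A i), IsNMMod φ →
        val ρ P H (r i) (modNM i φ π) ≤ val ρ P H (r i) (lift π)) ↔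
    (∀ (i : ι) (k : ℕ → S → A i → A i),
        val ρ P H (r i)
            (lift (modM i (fun t s b c => if c = k t s b then 1 else 0) π)) ≤
          val ρ P H (r i) (lift π)) :=
  correlated_equilibrium_iff_markov_deterministic_general ρ P π hρ hπ hP H r
end

section
/- In a constrained finite-horizon Markov game, the following are equivalent for a feasible Markovian policy π: (1) for every player i, V^{r^i}(π) ≥ V^{r^i}(φ^i ∘ π) for every i-feasible non-Markovian stochastic modification φ^i ∈ Φ^i_{NM}; (2) for every player i, V^{r^i}(π) ≥ V^{r^i}(φ^i ∘ π) for every i-feasible Markovian stochastic modification φ^i ∈ Φ^i_M; (3) for every player i, V^{r^i}(π) ≥ Σ_k α_k V^{r^i}(φ^i(k) ∘ π) for every α ∈ Δ(K^i) satisfying Σ_k α_k V^{g^{i,j}}(φ^i(k) ∘ π) ≥ c^{i,j} for all j, where {φ^i(k)}_{k=1}^{K^i} = Φ^i_{M,det}. -/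
open Finset

set_option linter.unusedSectionVars false
set_option maxHeartbeats 1000000


open Finset

section pi
variable {ι β : Type} [Fintype ι] [DecidableEq ι] [Fintype β] [DecidableEq β]

lemma sum_prod_pi (w : ι → β → ℝ) :
    ∑ f : ι → β, ∏ j, w j (f j) = ∏ j, ∑ b, w j b := by
  rw [Finset.prod_univ_sum]
  rw [Fintype.piFinset_univ]

lemma sum_pi_mul (w : ι → β → ℝ) (hw : ∀ j, ∑ b, w j b = 1) (i₀ : ι) (G : β → ℝ) :
    ∑ f : ι → β, (∏ j, w j (f j)) * G (f i₀) = ∑ b, w i₀ b * G b := by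
  have key : ∀ f : ι → β, (∏ j, w j (f j)) * G (f i₀)
      = ∏ j, (w j (f j) * if j = i₀ then G (f j) else 1) := by
    intro f
    rw [Finset.prod_mul_distrib]
    congr 1
    simp [Finset.prod_ite_eq']
  simp only [key]
  rw [sum_prod_pi (fun j b => w j b * if j = i₀ then G b else 1)]
  rw [Finset.prod_eq_single i₀]
  · simp
  · intro j _ hj
    simp [hj, hw j]
  · simp

lemma sum_pi_split (w : ι → β → ℝ) (i₀ : ι) (hw : ∑ b, w i₀ b = 1)
    (E : (ι → β) → ℝ) (hE : ∀ f b, E (Function.update f i₀ b) = E f) (G : β → ℝ) :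
    ∑ f : ι → β, (∏ j, w j (f j)) * (E f * G (f i₀))
      = (∑ f : ι → β, (∏ j, w j (f j)) * E f) * (∑ b, w i₀ b * G b) := by
  have prodkey : ∀ (f : ι → β) (b : β),
      w i₀ (f i₀) * ∏ j, w j (Function.update f i₀ b j)
        = w i₀ b * ∏ j, w j (f j) := by
    intro f b
    rw [← Finset.mul_prod_erase univ (fun j => w j (Function.update f i₀ b j)) (mem_univ i₀),
        ← Finset.mul_prod_erase univ (fun j => w j (f j)) (mem_univ i₀)]
    have : ∀ j ∈ univ.erase i₀, w j (Function.update f i₀ b j) = w j (f j) := by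
      intro j hj
      rw [Function.update_of_ne (Finset.ne_of_mem_erase hj)]
    rw [Finset.prod_congr rfl this]
    simp [Function.update_self]
    ring
  -- introduce extra sum over b
  have step1 : ∑ f : ι → β, (∏ j, w j (f j)) * (E f * G (f i₀))
      = ∑ p : (ι → β) × β, w i₀ p.2 * ((∏ j, w j (p.1 j)) * (E p.1 * G (p.1 i₀))) := by
    rw [Fintype.sum_prod_type]
    congr 1; funext f
    simp only []
    rw [← Finset.sum_mul (f := fun y => w i₀ y)]
    rw [hw, one_mul]
  rw [step1]
  -- reindex by the involution T (f, b) = (update f i₀ b, f i₀)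
  have inv : Function.Involutive
      (fun p : (ι → β) × β => (Function.update p.1 i₀ p.2, p.1 i₀)) := by
    intro p
    simp [Function.update_idem, Function.update_self, Function.update_eq_self]
  have step2 : ∑ p : (ι → β) × β, w i₀ p.2 * ((∏ j, w j (p.1 j)) * (E p.1 * G (p.1 i₀)))
      = ∑ p : (ι → β) × β,
          w i₀ (p.1 i₀) * ((∏ j, w j (Function.update p.1 i₀ p.2 j)) * (E p.1 * G p.2)) := by
    rw [← Function.Bijective.sum_comp inv.bijective
      (fun p : (ι → β) × β => w i₀ p.2 * ((∏ j, w j (p.1 j)) * (E p.1 * G (p.1 i₀))))]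
    congr 1; funext p
    simp only [Function.update_self, hE]
  rw [step2]
  have step3 : ∀ p : (ι → β) × β,
      w i₀ (p.1 i₀) * ((∏ j, w j (Function.update p.1 i₀ p.2 j)) * (E p.1 * G p.2))
        = ((∏ j, w j (p.1 j)) * E p.1) * (w i₀ p.2 * G p.2) := by
    intro p
    have h := prodkey p.1 p.2
    linear_combination (E p.1 * G p.2) * h
  simp only [step3]
  rw [Fintype.sum_prod_type, Finset.sum_mul_sum]

end pi

namespace MGAux
open MG

variable {S : Type} {ι : Type} {A : ι → Type}
variable [Fintype S] [DecidableEq S] [Fintype ι] [DecidableEq ι]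
variable [∀ i, Fintype (A i)] [∀ i, DecidableEq (A i)]

/-- the snoc equivalence used to peel the last step of a history -/
def snocEquiv (X : Type) (t : ℕ) : ((Fin t → X) × X) ≃ (Fin (t+1) → X) where
  toFun p := Fin.snoc p.1 p.2
  invFun h := (fun k => h k.castSucc, h (Fin.last t))
  left_inv p := by
    ext k
    · simp [Fin.snoc_castSucc]
    · simp [Fin.snoc_last]
  right_inv h := by
    funext k
    induction k using Fin.lastCases with
    | last => simp [Fin.snoc_last]
    | cast k => simp [Fin.snoc_castSucc]

lemma histProb_nonneg (ρ : S → ℝ) (P : ℕ → S → (∀ i, A i) → S → ℝ) (σ : HPolicy S A)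
    (hρ : ∀ s, 0 ≤ ρ s) (hP : ∀ t s a s', 0 ≤ P t s a s')
    (hσ : ∀ t h s a, 0 ≤ σ t h s a) :
    ∀ t h s, 0 ≤ histProb ρ P σ t h s := by
  intro t
  induction t with
  | zero => intro h s; exact hρ s
  | succ t ih =>
      intro h s
      exact mul_nonneg (mul_nonneg (ih _ _) (hσ _ _ _ _)) (hP _ _ _ _)

lemma sum_histProb_succ (ρ : S → ℝ) (P : ℕ → S → (∀ i, A i) → S → ℝ) (σ : HPolicy S A)
    (t : ℕ) (s : S) :
    ∑ h : Fin (t+1) → S × (∀ i, A i), histProb ρ P σ (t+1) h s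
      = ∑ s', ∑ a, occ ρ P σ t s' a * P t s' a s := by
  rw [← Equiv.sum_comp (snocEquiv (S × (∀ i, A i)) t)
    (fun h => histProb ρ P σ (t+1) h s)]
  have hval : ∀ p : (Fin t → S × (∀ i, A i)) × (S × (∀ i, A i)),
      histProb ρ P σ (t+1) (snocEquiv (S × (∀ i, A i)) t p) s
        = histProb ρ P σ t p.1 p.2.1 * σ t p.1 p.2.1 p.2.2 * P t p.2.1 p.2.2 s := by
    intro p
    show histProb ρ P σ t _ _ * _ * _ = _
    have h1 : (fun k : Fin t => (Fin.snoc p.1 p.2 : Fin (t+1) → S × (∀ i, A i)) k.castSucc) = p.1 := by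
      funext k; simp [Fin.snoc_castSucc]
    have h2 : (Fin.snoc p.1 p.2 : Fin (t+1) → S × (∀ i, A i)) (Fin.last t) = p.2 := by
      simp [Fin.snoc_last]
    rw [show ((snocEquiv (S × (∀ i, A i)) t) p : Fin (t+1) → S × (∀ i, A i)) = Fin.snoc p.1 p.2 from rfl]
    rw [h1, h2]
  simp only [hval]
  rw [Fintype.sum_prod_type]
  rw [Finset.sum_comm]
  rw [Fintype.sum_prod_type]
  congr 1; funext s'
  congr 1; funext a
  rw [occ, Finset.sum_mul]

lemma occ_lift (ρ : S → ℝ) (P : ℕ → S → (∀ i, A i) → S → ℝ) (μ : MPolicy S A)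
    (t : ℕ) (s : S) (a : ∀ i, A i) :
    occ ρ P (lift μ) t s a = (∑ h, histProb ρ P (lift μ) t h s) * μ t s a := by
  rw [occ, Finset.sum_mul]
  rfl

lemma val_congr (ρ : S → ℝ) (P : ℕ → S → (∀ i, A i) → S → ℝ) (H : ℕ)
    (σ₁ σ₂ : HPolicy S A)
    (hocc : ∀ t, t < H → ∀ s a, occ ρ P σ₁ t s a = occ ρ P σ₂ t s a)
    (f : ℕ → S → (∀ i, A i) → ℝ) :
    val ρ P H f σ₁ = val ρ P H f σ₂ := by
  unfold MG.val
  refine Finset.sum_congr rfl fun t ht => ?_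
  refine Finset.sum_congr rfl fun s _ => ?_
  refine Finset.sum_congr rfl fun a _ => ?_
  rw [hocc t (Finset.mem_range.mp ht) s a]

lemma modNM_nonneg (i : ι) (φ : NMMod S A i) (π : MPolicy S A)
    (hφ : IsNMMod φ) (hπ : IsMPolicy π) :
    ∀ t h s a, 0 ≤ modNM i φ π t h s a := by
  intro t h s a
  exact Finset.sum_nonneg fun b _ => mul_nonneg ((hφ t h s b).1 _) ((hπ t s).1 _)

lemma detToM_dist {H : ℕ} (i : ι) (k : DMod S A H i) (t : ℕ) (s : S) (b : A i) :
    IsDist (detToM k t s b) := by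
  unfold detToM
  constructor
  · intro c
    split <;> dsimp only <;> split <;> norm_num
  · split <;> simp [Finset.sum_ite_eq']



/-- Markovianization of a non-Markovian modification. -/
noncomputable def mkv (ρ : S → ℝ) (P : ℕ → S → (∀ i, A i) → S → ℝ) (π : MPolicy S A)
    (i : ι) (φ : NMMod S A i) : MMod S A i := fun t s b c =>
  if (∑ h, histProb ρ P (modNM i φ π) t h s) = 0 then (if c = b then 1 else 0)
  else (∑ h, histProb ρ P (modNM i φ π) t h s * φ t h s b c) /
    (∑ h, histProb ρ P (modNM i φ π) t h s)

lemma markovize (ρ : S → ℝ) (P : ℕ → S → (∀ i, A i) → S → ℝ) (π : MPolicy S A)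
    (hρ : IsDist ρ) (hπ : IsMPolicy π) (hP : IsKernel P)
    (i : ι) (φ : NMMod S A i) (hφ : IsNMMod φ) :
    IsMMod (mkv ρ P π i φ) ∧
      ∀ t s a, occ ρ P (lift (modM i (mkv ρ P π i φ) π)) t s a
        = occ ρ P (modNM i φ π) t s a := by
  have hσnn := modNM_nonneg i φ π hφ hπ
  have hpnn : ∀ t h s, 0 ≤ histProb ρ P (modNM i φ π) t h s :=
    histProb_nonneg ρ P _ hρ.1 (fun t s a s' => (hP t s a).1 s') hσnn
  have hpsnn : ∀ t s, 0 ≤ ∑ h, histProb ρ P (modNM i φ π) t h s :=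
    fun t s => Finset.sum_nonneg fun h _ => hpnn t h s
  have hps0 : ∀ t s, (∑ h, histProb ρ P (modNM i φ π) t h s) = 0 →
      ∀ h, histProb ρ P (modNM i φ π) t h s = 0 := by
    intro t s h0 h
    exact (Finset.sum_eq_zero_iff_of_nonneg (fun h _ => hpnn t h s)).mp h0 h (Finset.mem_univ h)
  have hNsum : ∀ t s b, (∑ c, ∑ h, histProb ρ P (modNM i φ π) t h s * φ t h s b c)
      = ∑ h, histProb ρ P (modNM i φ π) t h s := by
    intro t s b
    rw [Finset.sum_comm]
    refine Finset.sum_congr rfl fun h _ => ?_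
    rw [← Finset.mul_sum, (hφ t h s b).2, mul_one]
  have hmm : IsMMod (mkv ρ P π i φ) := by
    intro t s b
    unfold mkv
    by_cases h0 : (∑ h, histProb ρ P (modNM i φ π) t h s) = 0
    · simp only [h0, if_true]
      constructor
      · intro c; dsimp only; split <;> norm_num
      · simp [Finset.sum_ite_eq']
    · simp only [h0, if_false]
      constructor
      · intro c
        exact div_nonneg (Finset.sum_nonneg fun h _ =>
          mul_nonneg (hpnn t h s) ((hφ t h s b).1 c)) (hpsnn t s)
      · rw [← Finset.sum_div, hNsum t s b, div_self h0]
  refine ⟨hmm, ?_⟩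
  have occ_of_ps : ∀ t,
      (∀ s, (∑ h, histProb ρ P (lift (modM i (mkv ρ P π i φ) π)) t h s)
        = ∑ h, histProb ρ P (modNM i φ π) t h s) →
      ∀ s a, occ ρ P (lift (modM i (mkv ρ P π i φ) π)) t s a
        = occ ρ P (modNM i φ π) t s a := by
    intro t hkey s a
    rw [occ_lift, hkey s]
    have hR : occ ρ P (modNM i φ π) t s a
        = ∑ b, (∑ h, histProb ρ P (modNM i φ π) t h s * φ t h s b (a i)) *
            π t s (Function.update a i b) := by
      unfold MG.occ
      have hterm : ∀ h, histProb ρ P (modNM i φ π) t h s * modNM i φ π t h s a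
          = ∑ b, (histProb ρ P (modNM i φ π) t h s * φ t h s b (a i)) *
              π t s (Function.update a i b) := by
        intro h
        unfold MG.modNM
        rw [Finset.mul_sum]
        exact Finset.sum_congr rfl fun b _ => by ring
      simp only [hterm]
      rw [Finset.sum_comm]
      exact Finset.sum_congr rfl fun b _ => by rw [← Finset.sum_mul]
    by_cases h0 : (∑ h, histProb ρ P (modNM i φ π) t h s) = 0
    · rw [h0, zero_mul]
      symm
      unfold MG.occ
      exact Finset.sum_eq_zero fun h _ => by rw [hps0 t s h0 h, zero_mul]
    · have hmod : modM i (mkv ρ P π i φ) π t s a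
          = (∑ b, (∑ h, histProb ρ P (modNM i φ π) t h s * φ t h s b (a i)) *
              π t s (Function.update a i b)) / (∑ h, histProb ρ P (modNM i φ π) t h s) := by
        unfold MG.modM mkv
        simp only [h0, if_false]
        rw [Finset.sum_div]
        exact Finset.sum_congr rfl fun b _ => by rw [div_mul_eq_mul_div]
      rw [hmod, mul_div_cancel₀ _ h0, hR]
  have key : ∀ t s, (∑ h, histProb ρ P (lift (modM i (mkv ρ P π i φ) π)) t h s)
      = ∑ h, histProb ρ P (modNM i φ π) t h s := by
    intro t
    induction t with
    | zero => intro s; rfl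
    | succ t ih =>
        intro s
        rw [sum_histProb_succ, sum_histProb_succ]
        refine Finset.sum_congr rfl fun s' _ => Finset.sum_congr rfl fun a _ => ?_
        rw [occ_of_ps t ih s' a]
  exact fun t s a => occ_of_ps t (key t) s a



/-- Realization of a mixture of deterministic modifications as a single
non-Markovian modification. -/
noncomputable def mixmod (ρ : S → ℝ) (P : ℕ → S → (∀ i, A i) → S → ℝ) (π : MPolicy S A)
    {H : ℕ} (i : ι) (α : DMod S A H i → ℝ) : NMMod S A i := fun t h s b c =>
  if (∑ k, α k * histProb ρ P (lift (modM i (detToM k) π)) t h s) = 0 then (if c = b then 1 else 0)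
  else (∑ k, α k * histProb ρ P (lift (modM i (detToM k) π)) t h s * detToM k t s b c) /
    (∑ k, α k * histProb ρ P (lift (modM i (detToM k) π)) t h s)

lemma mix (ρ : S → ℝ) (P : ℕ → S → (∀ i, A i) → S → ℝ) (π : MPolicy S A)
    (hρ : IsDist ρ) (hπ : IsMPolicy π) (hP : IsKernel P)
    {H : ℕ} (i : ι) (α : DMod S A H i → ℝ) (hα0 : ∀ k, 0 ≤ α k) (hα1 : ∑ k, α k = 1) :
    IsNMMod (mixmod ρ P π i α) ∧
      ∀ t s a, occ ρ P (modNM i (mixmod ρ P π i α) π) t s a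
        = ∑ k, α k * occ ρ P (lift (modM i (detToM k) π)) t s a := by
  have hμnn : ∀ (k : DMod S A H i) t s a, 0 ≤ modM i (detToM k) π t s a := by
    intro k t s a
    exact Finset.sum_nonneg fun b _ =>
      mul_nonneg ((detToM_dist i k t s b).1 _) ((hπ t s).1 _)
  have hpknn : ∀ (k : DMod S A H i) t h s,
      0 ≤ histProb ρ P (lift (modM i (detToM k) π)) t h s := by
    intro k
    exact histProb_nonneg ρ P _ hρ.1 (fun t s a s' => (hP t s a).1 s')
      (fun t h s a => hμnn k t s a)
  have hD0 : ∀ t (h : Fin t → S × (∀ i, A i)) s,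
      (∑ k, α k * histProb ρ P (lift (modM i (detToM k) π)) t h s) = 0 →
      ∀ k, α k * histProb ρ P (lift (modM i (detToM k) π)) t h s = 0 := by
    intro t h s h0 k
    exact (Finset.sum_eq_zero_iff_of_nonneg
      (fun k _ => mul_nonneg (hα0 k) (hpknn k t h s))).mp h0 k (Finset.mem_univ k)
  have hNumsum : ∀ t (h : Fin t → S × (∀ i, A i)) s b,
      (∑ c, ∑ k, α k * histProb ρ P (lift (modM i (detToM k) π)) t h s * detToM k t s b c)
        = ∑ k, α k * histProb ρ P (lift (modM i (detToM k) π)) t h s := by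
    intro t h s b
    rw [Finset.sum_comm]
    refine Finset.sum_congr rfl fun k _ => ?_
    rw [← Finset.mul_sum, (detToM_dist i k t s b).2, mul_one]
  have hnm : IsNMMod (mixmod ρ P π i α) := by
    intro t h s b
    unfold mixmod
    by_cases h0 : (∑ k, α k * histProb ρ P (lift (modM i (detToM k) π)) t h s) = 0
    · simp only [h0, if_true]
      constructor
      · intro c; dsimp only; split <;> norm_num
      · simp [Finset.sum_ite_eq']
    · simp only [h0, if_false]
      constructor
      · intro c
        refine div_nonneg (Finset.sum_nonneg fun k _ => ?_)
          (Finset.sum_nonneg fun k _ => mul_nonneg (hα0 k) (hpknn k t h s))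
        exact mul_nonneg (mul_nonneg (hα0 k) (hpknn k t h s)) ((detToM_dist i k t s b).1 _)
      · rw [← Finset.sum_div, hNumsum t h s b, div_self h0]
  have prodkey : ∀ t (h : Fin t → S × (∀ i, A i)) s a,
      (∑ k, α k * histProb ρ P (lift (modM i (detToM k) π)) t h s) *
          modNM i (mixmod ρ P π i α) π t h s a
        = ∑ k, α k * histProb ρ P (lift (modM i (detToM k) π)) t h s *
            modM i (detToM k) π t s a := by
    intro t h s a
    by_cases h0 : (∑ k, α k * histProb ρ P (lift (modM i (detToM k) π)) t h s) = 0
    · rw [h0, zero_mul]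
      symm
      exact Finset.sum_eq_zero fun k _ => by rw [hD0 t h s h0 k, zero_mul]
    · have hmod : modNM i (mixmod ρ P π i α) π t h s a
          = (∑ b, (∑ k, α k * histProb ρ P (lift (modM i (detToM k) π)) t h s *
              detToM k t s b (a i)) * π t s (Function.update a i b)) /
            (∑ k, α k * histProb ρ P (lift (modM i (detToM k) π)) t h s) := by
        unfold MG.modNM mixmod
        simp only [h0, if_false]
        rw [Finset.sum_div]
        exact Finset.sum_congr rfl fun b _ => by rw [div_mul_eq_mul_div]
      rw [hmod, mul_div_cancel₀ _ h0]
      simp only [Finset.sum_mul]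
      rw [Finset.sum_comm]
      refine Finset.sum_congr rfl fun k _ => ?_
      unfold MG.modM
      rw [Finset.mul_sum]
      refine Finset.sum_congr rfl fun b _ => ?_
      ring
  have key : ∀ t (h : Fin t → S × (∀ i, A i)) s,
      histProb ρ P (modNM i (mixmod ρ P π i α) π) t h s
        = ∑ k, α k * histProb ρ P (lift (modM i (detToM k) π)) t h s := by
    intro t
    induction t with
    | zero =>
        intro h s
        show ρ s = _
        rw [show (∑ k, α k * histProb ρ P (lift (modM i (detToM k) π)) 0 h s)
            = ∑ k, α k * ρ s from rfl, ← Finset.sum_mul, hα1, one_mul]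
    | succ t ih =>
        intro h s
        show histProb ρ P (modNM i (mixmod ρ P π i α) π) t _ _ * _ * _ = _
        rw [ih _, prodkey]
        rw [Finset.sum_mul]
        refine Finset.sum_congr rfl fun k _ => ?_
        show _ = α k * (histProb ρ P (lift (modM i (detToM k) π)) t
            (fun m => h m.castSucc) (h (Fin.last t)).1 *
          modM i (detToM k) π t (h (Fin.last t)).1 (h (Fin.last t)).2 *
          P t (h (Fin.last t)).1 (h (Fin.last t)).2 s)
        ring
  refine ⟨hnm, ?_⟩
  intro t s a
  unfold MG.occ
  have hterm : ∀ h, histProb ρ P (modNM i (mixmod ρ P π i α) π) t h s *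
      modNM i (mixmod ρ P π i α) π t h s a
      = ∑ k, α k * histProb ρ P (lift (modM i (detToM k) π)) t h s *
          modM i (detToM k) π t s a := by
    intro h
    rw [key t h s, prodkey]
  simp only [hterm]
  rw [Finset.sum_comm]
  refine Finset.sum_congr rfl fun k _ => ?_
  rw [Finset.mul_sum]
  refine Finset.sum_congr rfl fun h _ => ?_
  show _ = α k * (histProb ρ P (lift (modM i (detToM k) π)) t h s *
      modM i (detToM k) π t s a)
  ring



/-- Per-time weight of a Markovian modification on deterministic tables. -/
noncomputable def wgt {H : ℕ} (i : ι) (φ : MMod S A i) :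
    Fin H → (S → A i → A i) → ℝ :=
  fun τ f => ∏ s, ∏ b, φ τ.1 s b (f s b)

/-- Product weight over all times: the mixing distribution on deterministic
modifications induced by a Markovian stochastic modification. -/
noncomputable def dweight {H : ℕ} (i : ι) (φ : MMod S A i) : DMod S A H i → ℝ :=
  fun k => ∏ τ, wgt i φ τ (k τ)

lemma wgt_sum_one {H : ℕ} (i : ι) (φ : MMod S A i) (hφ : IsMMod φ) (τ : Fin H) :
    ∑ f : S → A i → A i, wgt (H := H) i φ τ f = 1 := by
  unfold wgt
  have h1 := sum_prod_pi (fun (s : S) (g : A i → A i) => ∏ b, φ τ.1 s b (g b))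
  beta_reduce at h1
  rw [h1]
  refine Finset.prod_eq_one fun s _ => ?_
  rw [sum_prod_pi (fun b c => φ τ.1 s b c)]
  exact Finset.prod_eq_one fun b _ => (hφ τ.1 s b).2

lemma wgt_nonneg {H : ℕ} (i : ι) (φ : MMod S A i) (hφ : IsMMod φ) (τ : Fin H)
    (f : S → A i → A i) : 0 ≤ wgt (H := H) i φ τ f :=
  Finset.prod_nonneg fun s _ => Finset.prod_nonneg fun b _ => (hφ τ.1 s b).1 _

lemma dweight_nonneg {H : ℕ} (i : ι) (φ : MMod S A i) (hφ : IsMMod φ)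
    (k : DMod S A H i) : 0 ≤ dweight i φ k :=
  Finset.prod_nonneg fun τ _ => wgt_nonneg i φ hφ τ _

lemma dweight_sum_one {H : ℕ} (i : ι) (φ : MMod S A i) (hφ : IsMMod φ) :
    ∑ k : DMod S A H i, dweight i φ k = 1 := by
  unfold dweight
  rw [sum_prod_pi (fun τ f => wgt (H := H) i φ τ f)]
  exact Finset.prod_eq_one fun τ _ => wgt_sum_one i φ hφ τ

lemma wgt_marg {H : ℕ} (i : ι) (φ : MMod S A i) (hφ : IsMMod φ) (τ : Fin H)
    (s : S) (b : A i) (c : A i) :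
    ∑ f : S → A i → A i, wgt (H := H) i φ τ f * (if c = f s b then 1 else 0)
      = φ τ.1 s b c := by
  unfold wgt
  have h1 := sum_pi_mul (fun (s : S) (g : A i → A i) => ∏ b, φ τ.1 s b (g b))
    (fun s => by
      rw [sum_prod_pi (fun b c => φ τ.1 s b c)]
      exact Finset.prod_eq_one fun b _ => (hφ τ.1 s b).2)
    s (fun g => if c = g b then 1 else 0)
  beta_reduce at h1
  rw [h1]
  have h2 := sum_pi_mul (fun b c => φ τ.1 s b c) (fun b => (hφ τ.1 s b).2)
    b (fun x => if c = x then 1 else 0)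
  beta_reduce at h2
  rw [h2]
  simp [Finset.sum_ite_eq]

lemma modM_det_eval {H : ℕ} (i : ι) (π : MPolicy S A) (k : DMod S A H i)
    {t : ℕ} (hlt : t < H) (s : S) (a : ∀ i, A i) :
    modM i (detToM k) π t s a
      = ∑ b, (if a i = k ⟨t, hlt⟩ s b then 1 else 0) * π t s (Function.update a i b) := by
  unfold MG.modM MG.detToM
  refine Finset.sum_congr rfl fun b _ => ?_
  rw [dif_pos hlt]

lemma modM_det_congr {H : ℕ} (i : ι) (π : MPolicy S A) {t : ℕ} (hlt : t < H)
    (k₁ k₂ : DMod S A H i) (hk : k₁ ⟨t, hlt⟩ = k₂ ⟨t, hlt⟩) (s : S) (a : ∀ i, A i) :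
    modM i (detToM k₁) π t s a = modM i (detToM k₂) π t s a := by
  rw [modM_det_eval i π k₁ hlt, modM_det_eval i π k₂ hlt, hk]

lemma modM_phi_sum {H : ℕ} (i : ι) (π : MPolicy S A) (φ : MMod S A i) (hφ : IsMMod φ)
    {t : ℕ} (hlt : t < H) (s : S) (a : ∀ i, A i) :
    ∑ f : S → A i → A i, wgt (H := H) i φ ⟨t, hlt⟩ f *
        (∑ b, (if a i = f s b then 1 else 0) * π t s (Function.update a i b))
      = modM i φ π t s a := by
  have step : ∀ f : S → A i → A i, wgt (H := H) i φ ⟨t, hlt⟩ f *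
      (∑ b, (if a i = f s b then 1 else 0) * π t s (Function.update a i b))
      = ∑ b, (wgt (H := H) i φ ⟨t, hlt⟩ f * (if a i = f s b then 1 else 0)) *
          π t s (Function.update a i b) := by
    intro f
    rw [Finset.mul_sum]
    exact Finset.sum_congr rfl fun b _ => by ring
  simp only [step]
  rw [Finset.sum_comm]
  unfold MG.modM
  refine Finset.sum_congr rfl fun b _ => ?_
  rw [← Finset.sum_mul, wgt_marg i φ hφ ⟨t, hlt⟩ s b (a i)]

lemma keyMu {H : ℕ} (i : ι) (π : MPolicy S A) (φ : MMod S A i) (hφ : IsMMod φ)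
    {t : ℕ} (hlt : t < H) (s : S) (a : ∀ i, A i) :
    ∑ k : DMod S A H i, dweight i φ k * modM i (detToM k) π t s a
      = modM i φ π t s a := by
  have step : ∀ k : DMod S A H i, dweight i φ k * modM i (detToM k) π t s a
      = (∏ τ, wgt (H := H) i φ τ (k τ)) *
          (∑ b, (if a i = k ⟨t, hlt⟩ s b then 1 else 0) * π t s (Function.update a i b)) := by
    intro k
    rw [modM_det_eval i π k hlt]
    rfl
  simp only [step]
  rw [sum_pi_mul (wgt (H := H) i φ) (wgt_sum_one i φ hφ) ⟨t, hlt⟩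
    (fun f => ∑ b, (if a i = f s b then 1 else 0) * π t s (Function.update a i b))]
  exact modM_phi_sum i π φ hφ hlt s a

lemma claimC (ρ : S → ℝ) (P : ℕ → S → (∀ i, A i) → S → ℝ) (π : MPolicy S A)
    {H : ℕ} (i : ι) (φ : MMod S A i) (hφ : IsMMod φ) :
    ∀ t, t ≤ H → ∀ (h : Fin t → S × (∀ i, A i)) (s : S) (E : DMod S A H i → ℝ),
      (∀ (k : DMod S A H i) (τ : Fin H) (f : S → A i → A i), τ.1 < t →
        E (Function.update k τ f) = E k) →
      ∑ k : DMod S A H i, dweight i φ k * E k *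
          histProb ρ P (lift (modM i (detToM k) π)) t h s
        = (∑ k : DMod S A H i, dweight i φ k * E k) *
            histProb ρ P (lift (modM i φ π)) t h s := by
  intro t
  induction t with
  | zero =>
      intro _ h s E _
      rw [Finset.sum_mul]
      exact Finset.sum_congr rfl fun k _ => rfl
  | succ t ih =>
      intro hle h s E hE
      have hlt : t < H := Nat.lt_of_lt_of_le (Nat.lt_succ_self t) hle
      have hE1 : ∀ (k : DMod S A H i) (τ : Fin H) (f : S → A i → A i), τ.1 < t →
          (E (Function.update k τ f) *
            modM i (detToM (Function.update k τ f)) π t (h (Fin.last t)).1 (h (Fin.last t)).2)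
          = E k * modM i (detToM k) π t (h (Fin.last t)).1 (h (Fin.last t)).2 := by
        intro k τ f hτ
        rw [hE k τ f (Nat.lt_succ_of_lt hτ)]
        rw [modM_det_congr i π hlt (Function.update k τ f) k
          (Function.update_of_ne (Fin.ne_of_val_ne (Ne.symm (Nat.ne_of_lt hτ))) f k) _ _]
      have lhs1 : ∑ k : DMod S A H i, dweight i φ k * E k *
            histProb ρ P (lift (modM i (detToM k) π)) (t+1) h s
          = (∑ k : DMod S A H i, dweight i φ k *
              (E k * modM i (detToM k) π t (h (Fin.last t)).1 (h (Fin.last t)).2) *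
              histProb ρ P (lift (modM i (detToM k) π)) t
                (fun m => h m.castSucc) (h (Fin.last t)).1) *
              P t (h (Fin.last t)).1 (h (Fin.last t)).2 s := by
        rw [Finset.sum_mul]
        refine Finset.sum_congr rfl fun k _ => ?_
        show dweight i φ k * E k *
            (histProb ρ P (lift (modM i (detToM k) π)) t
              (fun m => h m.castSucc) (h (Fin.last t)).1 *
             modM i (detToM k) π t (h (Fin.last t)).1 (h (Fin.last t)).2 *
             P t (h (Fin.last t)).1 (h (Fin.last t)).2 s) = _
        ring
      rw [lhs1]
      rw [ih (Nat.le_of_succ_le hle) (fun m => h m.castSucc) (h (Fin.last t)).1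
        (fun k => E k * modM i (detToM k) π t (h (Fin.last t)).1 (h (Fin.last t)).2)
        (fun k τ f hτ => hE1 k τ f hτ)]
      have split : ∑ k : DMod S A H i, dweight i φ k *
            (E k * modM i (detToM k) π t (h (Fin.last t)).1 (h (Fin.last t)).2)
          = (∑ k : DMod S A H i, dweight i φ k * E k) *
              modM i φ π t (h (Fin.last t)).1 (h (Fin.last t)).2 := by
        have step : ∀ k : DMod S A H i, dweight i φ k *
            (E k * modM i (detToM k) π t (h (Fin.last t)).1 (h (Fin.last t)).2)
            = (∏ τ, wgt (H := H) i φ τ (k τ)) * (E k *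
                (∑ b, (if (h (Fin.last t)).2 i = k ⟨t, hlt⟩ (h (Fin.last t)).1 b then 1 else 0) *
                  π t (h (Fin.last t)).1 (Function.update (h (Fin.last t)).2 i b))) := by
          intro k
          rw [modM_det_eval i π k hlt]
          rfl
        simp only [step]
        rw [sum_pi_split (wgt (H := H) i φ) ⟨t, hlt⟩ (wgt_sum_one i φ hφ ⟨t, hlt⟩) E
          (fun k f => hE k ⟨t, hlt⟩ f (Nat.lt_succ_self t))
          (fun f => ∑ b, (if (h (Fin.last t)).2 i = f (h (Fin.last t)).1 b then 1 else 0) *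
            π t (h (Fin.last t)).1 (Function.update (h (Fin.last t)).2 i b))]
        rw [modM_phi_sum i π φ hφ hlt]
        rfl
      rw [split]
      show _ = (∑ k : DMod S A H i, dweight i φ k * E k) *
          (histProb ρ P (lift (modM i φ π)) t (fun m => h m.castSucc) (h (Fin.last t)).1 *
           modM i φ π t (h (Fin.last t)).1 (h (Fin.last t)).2 *
           P t (h (Fin.last t)).1 (h (Fin.last t)).2 s)
      ring

lemma decomp_occ (ρ : S → ℝ) (P : ℕ → S → (∀ i, A i) → S → ℝ) (π : MPolicy S A)
    {H : ℕ} (i : ι) (φ : MMod S A i) (hφ : IsMMod φ)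
    {t : ℕ} (hlt : t < H) (s : S) (a : ∀ i, A i) :
    occ ρ P (lift (modM i φ π)) t s a
      = ∑ k : DMod S A H i, dweight i φ k *
          occ ρ P (lift (modM i (detToM k) π)) t s a := by
  have hmu : ∀ (k : DMod S A H i) (τ : Fin H) (f : S → A i → A i), τ.1 < t →
      modM i (detToM (Function.update k τ f)) π t s a = modM i (detToM k) π t s a := by
    intro k τ f hτ
    exact modM_det_congr i π hlt _ _
      (Function.update_of_ne (Fin.ne_of_val_ne (Ne.symm (Nat.ne_of_lt hτ))) f k) s a
  have swap : ∑ k : DMod S A H i, dweight i φ k *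
        occ ρ P (lift (modM i (detToM k) π)) t s a
      = ∑ h : Fin t → S × (∀ i, A i), ∑ k : DMod S A H i, dweight i φ k *
          (modM i (detToM k) π t s a) *
          histProb ρ P (lift (modM i (detToM k) π)) t h s := by
    rw [Finset.sum_comm]
    refine Finset.sum_congr rfl fun k _ => ?_
    unfold MG.occ
    rw [Finset.mul_sum]
    refine Finset.sum_congr rfl fun h _ => ?_
    show dweight i φ k * (histProb ρ P (lift (modM i (detToM k) π)) t h s *
        modM i (detToM k) π t s a) = _
    ring
  rw [swap]
  have hper : ∀ h : Fin t → S × (∀ i, A i),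
      ∑ k : DMod S A H i, dweight i φ k * (modM i (detToM k) π t s a) *
          histProb ρ P (lift (modM i (detToM k) π)) t h s
        = (∑ k : DMod S A H i, dweight i φ k * (modM i (detToM k) π t s a)) *
            histProb ρ P (lift (modM i φ π)) t h s := by
    intro h
    exact claimC ρ P π i φ hφ t (Nat.le_of_lt hlt) h s
      (fun k => modM i (detToM k) π t s a) (fun k τ f hτ => hmu k τ f hτ)
  simp only [hper]
  rw [keyMu i π φ hφ hlt s a]
  rw [occ_lift, Finset.sum_mul]
  exact Finset.sum_congr rfl fun h _ => mul_comm _ _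



lemma val_mix {K : Type} [Fintype K] (ρ : S → ℝ) (P : ℕ → S → (∀ i, A i) → S → ℝ)
    (H : ℕ) (f : ℕ → S → (∀ i, A i) → ℝ) (α : K → ℝ)
    (σ : HPolicy S A) (σk : K → HPolicy S A)
    (hocc : ∀ t, t < H → ∀ s a, occ ρ P σ t s a = ∑ k, α k * occ ρ P (σk k) t s a) :
    val ρ P H f σ = ∑ k, α k * val ρ P H f (σk k) := by
  unfold MG.val
  have h1 : ∀ t ∈ Finset.range H, (∑ s, ∑ a, occ ρ P σ t s a * f t s a)
      = ∑ k, α k * ∑ s, ∑ a, occ ρ P (σk k) t s a * f t s a := by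
    intro t ht
    symm
    calc ∑ k, α k * ∑ s, ∑ a, occ ρ P (σk k) t s a * f t s a
        = ∑ k, ∑ s, ∑ a, α k * (occ ρ P (σk k) t s a * f t s a) := by
          refine Finset.sum_congr rfl fun k _ => ?_
          rw [Finset.mul_sum]
          exact Finset.sum_congr rfl fun s _ => by rw [Finset.mul_sum]
      _ = ∑ s, ∑ k, ∑ a, α k * (occ ρ P (σk k) t s a * f t s a) := Finset.sum_comm
      _ = ∑ s, ∑ a, ∑ k, α k * (occ ρ P (σk k) t s a * f t s a) :=
          Finset.sum_congr rfl fun s _ => Finset.sum_comm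
      _ = ∑ s, ∑ a, occ ρ P σ t s a * f t s a := by
          refine Finset.sum_congr rfl fun s _ => Finset.sum_congr rfl fun a _ => ?_
          rw [hocc t (Finset.mem_range.mp ht) s a, Finset.sum_mul]
          exact Finset.sum_congr rfl fun k _ => by ring
  rw [Finset.sum_congr rfl h1, Finset.sum_comm]
  exact Finset.sum_congr rfl fun k _ => by rw [Finset.mul_sum]

end MGAux


open MG in
/-- Equivalent notions of constrained correlated equilibrium (Theorem 2 of the paper):
for a feasible Markovian policy `π`, robustness to (1) all `i`-feasible non-Markovian
stochastic modifications, (2) all `i`-feasible Markovian stochastic modifications, and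
(3) all `i`-feasible convex combinations of Markovian deterministic modifications,
are equivalent. -/
theorem constrained_correlated_equilibrium_equivalent_notions
    {S : Type} {ι : Type} {A : ι → Type}
    [Fintype S] [DecidableEq S] [Fintype ι] [DecidableEq ι]
    [∀ i, Fintype (A i)] [∀ i, DecidableEq (A i)] [∀ i, Nonempty (A i)]
    (ρ : S → ℝ) (P : ℕ → S → (∀ i, A i) → S → ℝ) (π : MPolicy S A)
    (hρ : IsDist ρ) (hπ : IsMPolicy π) (hP : IsKernel P)
    (H J : ℕ) (r : ι → ℕ → S → (∀ i, A i) → ℝ)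
    (g : ι → Fin J → ℕ → S → (∀ i, A i) → ℝ) (c : ι → Fin J → ℝ)
    -- π is feasible
    (hfeas : ∀ (i : ι) (j : Fin J), c i j ≤ val ρ P H (g i j) (lift π)) :
    -- (1) ↔ (2)
    ((∀ (i : ι) (φ : NMMod S A i), IsNMMod φ →
        (∀ j, c i j ≤ val ρ P H (g i j) (modNM i φ π)) →
        val ρ P H (r i) (modNM i φ π) ≤ val ρ P H (r i) (lift π)) ↔
      (∀ (i : ι) (φ : MMod S A i), IsMMod φ →
        (∀ j, c i j ≤ val ρ P H (g i j) (lift (modM i φ π))) →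
        val ρ P H (r i) (lift (modM i φ π)) ≤ val ρ P H (r i) (lift π))) ∧
    -- (1) ↔ (3)
    ((∀ (i : ι) (φ : NMMod S A i), IsNMMod φ →
        (∀ j, c i j ≤ val ρ P H (g i j) (modNM i φ π)) →
        val ρ P H (r i) (modNM i φ π) ≤ val ρ P H (r i) (lift π)) ↔
      (∀ (i : ι) (α : DMod S A H i → ℝ), (∀ k, 0 ≤ α k) → (∑ k, α k = 1) →
        (∀ j, c i j ≤
          ∑ k, α k * val ρ P H (g i j) (lift (modM i (detToM k) π))) →
        (∑ k, α k * val ρ P H (r i) (lift (modM i (detToM k) π))) ≤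
          val ρ P H (r i) (lift π))) := by
  have h12 : (∀ (i : ι) (φ : NMMod S A i), IsNMMod φ →
      (∀ j, c i j ≤ val ρ P H (g i j) (modNM i φ π)) →
      val ρ P H (r i) (modNM i φ π) ≤ val ρ P H (r i) (lift π)) →
      (∀ (i : ι) (φ : MMod S A i), IsMMod φ →
      (∀ j, c i j ≤ val ρ P H (g i j) (lift (modM i φ π))) →
      val ρ P H (r i) (lift (modM i φ π)) ≤ val ρ P H (r i) (lift π)) := by
    intro h1 i φ hφ hfeasφ
    exact h1 i (mliftMod φ) (fun t h s b => hφ t s b) hfeasφ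
  have h21 : (∀ (i : ι) (φ : MMod S A i), IsMMod φ →
      (∀ j, c i j ≤ val ρ P H (g i j) (lift (modM i φ π))) →
      val ρ P H (r i) (lift (modM i φ π)) ≤ val ρ P H (r i) (lift π)) →
      (∀ (i : ι) (φ : NMMod S A i), IsNMMod φ →
      (∀ j, c i j ≤ val ρ P H (g i j) (modNM i φ π)) →
      val ρ P H (r i) (modNM i φ π) ≤ val ρ P H (r i) (lift π)) := by
    intro h2 i φ hφ hfeasφ
    obtain ⟨hmm, hocc⟩ := MGAux.markovize ρ P π hρ hπ hP i φ hφ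
    have hval : ∀ f, val ρ P H f (lift (modM i (MGAux.mkv ρ P π i φ) π))
        = val ρ P H f (modNM i φ π) :=
      fun f => MGAux.val_congr ρ P H _ _ (fun t _ s a => hocc t s a) f
    have hle := h2 i (MGAux.mkv ρ P π i φ) hmm
      (fun j => by rw [hval (g i j)]; exact hfeasφ j)
    rw [hval (r i)] at hle
    exact hle
  have h13 : (∀ (i : ι) (φ : NMMod S A i), IsNMMod φ →
      (∀ j, c i j ≤ val ρ P H (g i j) (modNM i φ π)) →
      val ρ P H (r i) (modNM i φ π) ≤ val ρ P H (r i) (lift π)) →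
      (∀ (i : ι) (α : DMod S A H i → ℝ), (∀ k, 0 ≤ α k) → (∑ k, α k = 1) →
      (∀ j, c i j ≤ ∑ k, α k * val ρ P H (g i j) (lift (modM i (detToM k) π))) →
      (∑ k, α k * val ρ P H (r i) (lift (modM i (detToM k) π))) ≤
        val ρ P H (r i) (lift π)) := by
    intro h1 i α hα0 hα1 hfeasα
    obtain ⟨hnm, hocc⟩ := MGAux.mix ρ P π hρ hπ hP i α hα0 hα1
    have hval : ∀ f, val ρ P H f (modNM i (MGAux.mixmod ρ P π i α) π)
        = ∑ k, α k * val ρ P H f (lift (modM i (detToM k) π)) :=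
      fun f => MGAux.val_mix ρ P H f α _ _ (fun t _ s a => hocc t s a)
    have hle := h1 i (MGAux.mixmod ρ P π i α) hnm
      (fun j => by rw [hval (g i j)]; exact hfeasα j)
    rw [hval (r i)] at hle
    exact hle
  have h31 : (∀ (i : ι) (α : DMod S A H i → ℝ), (∀ k, 0 ≤ α k) → (∑ k, α k = 1) →
      (∀ j, c i j ≤ ∑ k, α k * val ρ P H (g i j) (lift (modM i (detToM k) π))) →
      (∑ k, α k * val ρ P H (r i) (lift (modM i (detToM k) π))) ≤
        val ρ P H (r i) (lift π)) →
      (∀ (i : ι) (φ : NMMod S A i), IsNMMod φ →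
      (∀ j, c i j ≤ val ρ P H (g i j) (modNM i φ π)) →
      val ρ P H (r i) (modNM i φ π) ≤ val ρ P H (r i) (lift π)) := by
    intro h3 i φ hφ hfeasφ
    obtain ⟨hmm, hocc⟩ := MGAux.markovize ρ P π hρ hπ hP i φ hφ
    have hval : ∀ f, val ρ P H f (lift (modM i (MGAux.mkv ρ P π i φ) π))
        = val ρ P H f (modNM i φ π) :=
      fun f => MGAux.val_congr ρ P H _ _ (fun t _ s a => hocc t s a) f
    have hval2 : ∀ f, val ρ P H f (lift (modM i (MGAux.mkv ρ P π i φ) π))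
        = ∑ k : DMod S A H i, MGAux.dweight i (MGAux.mkv ρ P π i φ) k *
            val ρ P H f (lift (modM i (detToM k) π)) :=
      fun f => MGAux.val_mix ρ P H f _ _ _
        (fun t ht s a => MGAux.decomp_occ ρ P π i (MGAux.mkv ρ P π i φ) hmm ht s a)
    have hle := h3 i (MGAux.dweight i (MGAux.mkv ρ P π i φ))
      (MGAux.dweight_nonneg i _ hmm) (MGAux.dweight_sum_one i _ hmm)
      (fun j => by rw [← hval2 (g i j), hval (g i j)]; exact hfeasφ j)
    rw [← hval2 (r i), hval (r i)] at hle
    exact hle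
  exact ⟨⟨h12, h21⟩, ⟨h13, h31⟩⟩
end
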